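/- arXiv:2106.03366 — 12 statements merged into one kernel-verified Lean document; each statement's English description precedes it below -/
import Mathlib

section
/- Let P(z1,...,zn) be a complex polynomial and Γ1,...,Γn ⊆ ℂ non-empty open connected regions with 0 ∈ closure(Γ1), such that P is nonzero whenever each zℓ ∈ Γℓ. Then the specialization P2(z2,...,zn) = P(0,z2,...,zn) is either nonzero whenever zℓ ∈ Γℓ for ℓ ≥ 2, or identically zero. -/
/-!
On a connected domain, a locally uniform limit `F (x₀, ·)` of zero-free holomorphic functions
`F (t, ·)` is zero-free or identically zero (Hurwitz). Locally this is the minimum modulus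
principle: a lower bound for `‖F (x₀, ·)‖` on a small circle avoiding its zeros persists for `t`
near `x₀`, passes to the centre of the circle because `F (t, ·)` has no zeros, and survives the
limit `t → x₀`. Taking `t = z₁ ∈ Γ₁` tending to `0` and restricting to complex lines through a zero
of `P (0, ·)` in the open box `∏_{ℓ ≥ 2} Γ_ℓ` shows that `P (0, ·)` vanishes on a ball, hence
everywhere by the identity theorem.
-/

open MvPolynomial Set Filter Topology Metric

theorem Complex.le_norm_of_forall_mem_sphere_le_norm {f : ℂ → ℂ} {z : ℂ} {r m : ℝ} (hr : 0 < r)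
    (hd : DifferentiableOn ℂ f (closedBall z r)) (hne : ∀ s ∈ closedBall z r, f s ≠ 0)
    (hm : ∀ s ∈ sphere z r, m ≤ ‖f s‖) : m ≤ ‖f z‖ := by
  rcases le_or_gt m 0 with hm0 | hm0
  · exact hm0.trans (norm_nonneg _)
  have hinv : ‖(f z)⁻¹‖ ≤ m⁻¹ := by
    refine Complex.norm_le_of_forall_mem_frontier_norm_le (f := fun s => (f s)⁻¹)
      (isBounded_ball (x := z) (r := r)) ?_ ?_ ?_
    · rw [← closure_ball z hr.ne'] at hd hne
      exact (hd.inv hne).diffContOnCl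
    · intro s hs
      rw [frontier_ball z hr.ne'] at hs
      rw [norm_inv]
      exact inv_anti₀ hm0 (hm s hs)
    · rw [closure_ball z hr.ne']
      exact mem_closedBall_self hr.le
  rw [norm_inv] at hinv
  exact (inv_le_inv₀ (norm_pos_iff.2 (hne z (mem_closedBall_self hr.le))) hm0).mp hinv

theorem Complex.ne_zero_of_mem_closure_of_forall_mem_sphere_ne_zero {X : Type*} [TopologicalSpace X]
    {F : X × ℂ → ℂ} (hF : Continuous F) {T : Set X} {x₀ : X} (hx₀ : x₀ ∈ closure T)
    {z : ℂ} {r : ℝ} (hr : 0 < r)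
    (hdiff : ∀ t ∈ T, DifferentiableOn ℂ (fun s => F (t, s)) (closedBall z r))
    (hne : ∀ t ∈ T, ∀ s ∈ closedBall z r, F (t, s) ≠ 0)
    (hsphere : ∀ s ∈ sphere z r, F (x₀, s) ≠ 0) : F (x₀, z) ≠ 0 := by
  obtain ⟨s₀, hs₀, hmin⟩ := (isCompact_sphere z r).exists_isMinOn
    (NormedSpace.sphere_nonempty.2 hr.le) (hF.comp (Continuous.prodMk_right x₀)).norm.continuousOn
  set m := ‖F (x₀, s₀)‖
  have hm : 0 < m := norm_pos_iff.2 (hsphere s₀ hs₀)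
  have hnear : ∀ᶠ t in 𝓝 x₀, ∀ s ∈ sphere z r, m / 2 < ‖F (t, s)‖ :=
    (isCompact_sphere z r).eventually_forall_of_forall_eventually fun s hs =>
      (hF.norm.tendsto (x₀, s)).eventually_const_lt ((half_lt_self hm).trans_le (hmin hs))
  have hcenter : ∀ᶠ t in 𝓝[T] x₀, m / 2 ≤ ‖F (t, z)‖ := by
    filter_upwards [nhdsWithin_le_nhds hnear, self_mem_nhdsWithin] with t ht htT
    exact Complex.le_norm_of_forall_mem_sphere_le_norm hr (hdiff t htT) (hne t htT)
      fun s hs => (ht s hs).le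
  have := mem_closure_iff_nhdsWithin_neBot.mp hx₀
  have hlim : Tendsto (fun t => ‖F (t, z)‖) (𝓝[T] x₀) (𝓝 ‖F (x₀, z)‖) :=
    ((hF.comp (Continuous.prodMk_left z)).norm.tendsto x₀).mono_left nhdsWithin_le_nhds
  exact norm_pos_iff.1 ((half_pos hm).trans_le (ge_of_tendsto hlim hcenter))

theorem exists_closedBall_subset_forall_mem_sphere_ne_zero {f : ℂ → ℂ} {U : Set ℂ} {z : ℂ}
    (hU : U ∈ 𝓝 z) (hf : ∀ᶠ s in 𝓝[≠] z, f s ≠ 0) :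
    ∃ r > 0, closedBall z r ⊆ U ∧ ∀ s ∈ sphere z r, f s ≠ 0 := by
  obtain ⟨ε, hε, hball⟩ := eventually_nhds_iff_ball.mp
    ((eventually_nhdsWithin_iff.mp hf).and hU)
  refine ⟨ε / 2, half_pos hε, fun s hs => (hball s ?_).2, fun s hs => (hball s ?_).1 ?_⟩
  · exact closedBall_subset_ball (half_lt_self hε) hs
  · exact sphere_subset_closedBall.trans (closedBall_subset_ball (half_lt_self hε)) hs
  · exact ne_of_mem_sphere hs (half_pos hε).ne'

theorem Complex.hurwitz {X : Type*} [TopologicalSpace X] {F : X × ℂ → ℂ} (hF : Continuous F)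
    {T : Set X} {x₀ : X} (hx₀ : x₀ ∈ closure T) {U : Set ℂ} (hU : IsOpen U)
    (hUc : IsPreconnected U) (hdiff : ∀ t, DifferentiableOn ℂ (fun s => F (t, s)) U)
    (hne : ∀ t ∈ T, ∀ s ∈ U, F (t, s) ≠ 0) :
    (∀ s ∈ U, F (x₀, s) ≠ 0) ∨ EqOn (fun s => F (x₀, s)) 0 U := by
  rw [or_iff_not_imp_left]
  push Not
  rintro ⟨z, hzU, hz⟩
  have hf : AnalyticOnNhd ℂ (fun s => F (x₀, s)) U := (hdiff x₀).analyticOnNhd hU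
  refine hf.eqOn_zero_of_preconnected_of_eventuallyEq_zero hUc hzU ?_
  refine (hf z hzU).eventually_eq_zero_or_eventually_ne_zero.resolve_right fun hisol => ?_
  obtain ⟨r, hr, hball, hsphere⟩ :=
    exists_closedBall_subset_forall_mem_sphere_ne_zero (hU.mem_nhds hzU) hisol
  exact Complex.ne_zero_of_mem_closure_of_forall_mem_sphere_ne_zero hF hx₀ hr
    (fun t _ => (hdiff t).mono hball) (fun t ht s hs => hne t ht s (hball hs)) hsphere hz

theorem apply_eq_zero_of_segment_subset {X E : Type*} [TopologicalSpace X]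
    [NormedAddCommGroup E] [NormedSpace ℂ E] {F : X × E → ℂ} (hF : Continuous F)
    {T : Set X} {x₀ : X} (hx₀ : x₀ ∈ closure T) {B : Set E} (hB : IsOpen B)
    (hdiff : ∀ t, DifferentiableOn ℂ (fun w => F (t, w)) B)
    (hne : ∀ t ∈ T, ∀ w ∈ B, F (t, w) ≠ 0) {a b : E} (hab : segment ℝ a b ⊆ B)
    (ha : F (x₀, a) = 0) : F (x₀, b) = 0 := by
  set L : ℂ → E := ⇑(AffineMap.lineMap (k := ℂ) a b)
  have hL : Continuous L := AffineMap.lineMap_continuous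
  -- `L ⁻¹' B` need not be connected; its component of `0` contains `1` via the real segment.
  set U := connectedComponentIn (L ⁻¹' B) 0
  have hUB : MapsTo L U B := fun s hs => connectedComponentIn_subset (L ⁻¹' B) 0 hs
  have h1 : (1 : ℂ) ∈ U := by
    have hseg : ((↑) : ℝ → ℂ) '' Icc 0 1 ⊆ L ⁻¹' B := by
      rintro _ ⟨r, hr, rfl⟩
      apply hab
      rw [segment_eq_image_lineMap]
      refine ⟨r, hr, ?_⟩
      simp [L, AffineMap.lineMap_apply, Complex.coe_smul]
    exact (isPreconnected_Icc.image _ Complex.continuous_ofReal.continuousOn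
      ).subset_connectedComponentIn ⟨0, left_mem_Icc.2 zero_le_one, Complex.ofReal_zero⟩ hseg
      ⟨1, right_mem_Icc.2 zero_le_one, Complex.ofReal_one⟩
  have h0 : (0 : ℂ) ∈ U :=
    mem_connectedComponentIn (by simpa [L] using hab (left_mem_segment ℝ a b))
  have hLd : Differentiable ℂ L :=
    (AffineMap.contDiff_lineMap (n := 1) a b).differentiable one_ne_zero
  rcases Complex.hurwitz (F := fun p => F (p.1, L p.2))
      (hF.comp (continuous_fst.prodMk (hL.comp continuous_snd))) hx₀
      (hB.preimage hL).connectedComponentIn isPreconnected_connectedComponentIn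
      (fun t => (hdiff t).comp hLd.differentiableOn hUB)
      (fun t ht s hs => hne t ht (L s) (hUB hs)) with hnz | hzero
  · exact absurd (by simpa [L] using ha) (hnz 0 h0)
  · simpa [L] using hzero h1

theorem MvPolynomial.analyticOnNhd_eval_update {σ : Type*} [Fintype σ] [DecidableEq σ]
    (P : MvPolynomial σ ℂ) (i₀ : σ) :
    AnalyticOnNhd ℂ (fun p : ℂ × (σ → ℂ) => eval (Function.update p.2 i₀ p.1) P) univ := by
  intro p _
  simp_rw [← coe_aeval_eq_eval]
  refine AnalyticAt.aeval_mvPolynomial (fun i => ?_) P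
  rcases eq_or_ne i i₀ with rfl | hi
  · simp only [Function.update_self]
    exact analyticAt_fst
  · simp only [Function.update_of_ne hi]
    exact ((ContinuousLinearMap.proj i).comp (ContinuousLinearMap.snd ℂ ℂ (σ → ℂ))).analyticAt p

theorem stmt1_general (n : ℕ) (P : MvPolynomial (Fin (n+1)) ℂ)
    (Γ : Fin (n+1) → Set ℂ)
    (hopen : ∀ i, IsOpen (Γ i))
    (h0 : (0:ℂ) ∈ closure (Γ 0))
    (hstab : ∀ z : Fin (n+1) → ℂ, (∀ i, z i ∈ Γ i) → eval z P ≠ 0) :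
    (∀ z : Fin (n+1) → ℂ, (∀ i, i ≠ 0 → z i ∈ Γ i) →
        eval (Function.update z 0 0) P ≠ 0) ∨
    (∀ z : Fin (n+1) → ℂ, eval (Function.update z 0 0) P = 0) := by
  rw [or_iff_not_imp_left]
  push Not
  rintro ⟨zs, hzs, hzero⟩
  obtain ⟨ρ, hρ, hball⟩ :=
    Metric.isOpen_iff.mp (isOpen_set_pi (toFinite {i | i ≠ 0}) fun i _ => hopen i) zs hzs
  have hF := P.analyticOnNhd_eval_update 0
  have hslice : ∀ t, AnalyticOnNhd ℂ (fun w => eval (Function.update w 0 t) P) univ := fun t =>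
    hF.comp (f := fun w => (t, w)) (analyticOnNhd_const.prod analyticOnNhd_id) (mapsTo_univ _ _)
  have hne : ∀ t ∈ Γ 0, ∀ w ∈ ball zs ρ, eval (Function.update w 0 t) P ≠ 0 := by
    refine fun t ht w hw => hstab _ fun i => ?_
    rcases eq_or_ne i 0 with rfl | hi
    · simpa using ht
    · simpa [hi] using hball hw i hi
  have hlocal : ∀ w ∈ ball zs ρ, eval (Function.update w 0 0) P = 0 := fun w hw =>
    apply_eq_zero_of_segment_subset (F := fun p => eval (Function.update p.2 0 p.1) P)
      (continuousOn_univ.mp hF.continuousOn) h0 isOpen_ball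
      (fun t => (hslice t).differentiableOn.mono (subset_univ _))
      hne ((convex_ball zs ρ).segment_subset (mem_ball_self hρ) hw) hzero
  intro z
  exact (hslice 0).eqOn_zero_of_preconnected_of_eventuallyEq_zero isPreconnected_univ
    (mem_univ zs) (eventually_of_mem (ball_mem_nhds zs hρ) hlocal) (mem_univ z)

/-- Specialization at 0 preserves stability if 0 is in the closure of the region. -/
theorem stmt1 (n : ℕ) (P : MvPolynomial (Fin (n+1)) ℂ)
    (Γ : Fin (n+1) → Set ℂ)
    (hne : ∀ i, (Γ i).Nonempty) (hopen : ∀ i, IsOpen (Γ i))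
    (hconn : ∀ i, IsConnected (Γ i))
    (h0 : (0:ℂ) ∈ closure (Γ 0))
    (hstab : ∀ z : Fin (n+1) → ℂ, (∀ i, z i ∈ Γ i) → eval z P ≠ 0) :
    (∀ z : Fin (n+1) → ℂ, (∀ i, i ≠ 0 → z i ∈ Γ i) →
        eval (Function.update z 0 0) P ≠ 0) ∨
    (∀ z : Fin (n+1) → ℂ, eval (Function.update z 0 0) P = 0) :=
  stmt1_general n P Γ hopen h0 hstab
end

section
/- Let P(z1,...,zn) be a multi-affine complex polynomial and Γ1,...,Γn ⊆ ℂ non-empty open connected regions with Γ1 unbounded, such that P is nonzero whenever each zℓ ∈ Γℓ. Then the partial derivative P3(z2,...,zn) = ∂P/∂z1 (which is independent of z1 by multi-affineness) is either nonzero whenever zℓ ∈ Γℓ for ℓ ≥ 2, or identically zero. -/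
/-!
Write `P = a(z') z₀ + b(z')`, so that `∂P/∂z₀ = a`. Suppose `a` vanishes at some
`w ∈ Γ₁ × ⋯ × Γₙ` without being the zero polynomial. Stability gives `b(w) ≠ 0`, so `a / b` is
holomorphic near `w`, vanishes at `w` and is not locally constant; by the open mapping theorem it
maps every neighbourhood of `w` onto a neighbourhood of `0`. Hence for every `t` of large modulus
some `z'` near `w` has `(a / b)(z') = -1/t`, i.e. `P(t, z') = 0`; as `Γ₀` is unbounded, such a `t`
can be taken in `Γ₀`, contradicting stability.
-/

open MvPolynomial Filter Topology Bornology

theorem AnalyticAt.eventually_exists_mul_add_eq_zero {E : Type*} [NormedAddCommGroup E]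
    [NormedSpace ℂ E] {f g : E → ℂ} {z₀ : E} (hf : AnalyticAt ℂ f z₀) (hg : AnalyticAt ℂ g z₀)
    (hf₀ : f z₀ = 0) (hg₀ : g z₀ ≠ 0) (hf_ne : ¬ f =ᶠ[𝓝 z₀] 0) {V : Set E} (hV : V ∈ 𝓝 z₀) :
    ∀ᶠ t in cobounded ℂ, ∃ x ∈ V, f x * t + g x = 0 := by
  have hq₀ : (f / g) z₀ = 0 := by simp [hf₀]
  have hg_ne : ∀ᶠ x in 𝓝 z₀, g x ≠ 0 := hg.continuousAt.eventually_ne hg₀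
  have hopen : 𝓝 0 ≤ map (f / g) (𝓝 z₀) := by
    refine hq₀ ▸ ((hf.div hg hg₀).eventually_constant_or_nhds_le_map_nhds).resolve_left ?_
    refine fun hconst => hf_ne ?_
    filter_upwards [hconst, hg_ne] with x hx hgx
    simpa [hq₀, hgx] using hx
  have himage : (f / g) '' (V ∩ {x | g x ≠ 0}) ∈ 𝓝 0 :=
    hopen (image_mem_map (inter_mem hV hg_ne))
  have hinv : Tendsto (fun t : ℂ => -t⁻¹) (cobounded ℂ) (𝓝 0) := by
    simpa using (tendsto_inv₀_cobounded (α := ℂ)).neg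
  filter_upwards [hinv himage, eventually_ne_cobounded 0]
    with t ⟨x, ⟨hxV, hgx⟩, hx⟩ ht
  refine ⟨x, hxV, ?_⟩
  rw [Pi.div_apply, div_eq_iff hgx] at hx
  rw [hx]
  field_simp
  ring

namespace MvPolynomial

theorem eval_ne_zero_or_eq_zero_of_mul_add_ne_zero {σ : Type*} [Fintype σ]
    {a b : MvPolynomial σ ℂ} {U : Set (σ → ℂ)} (hU : IsOpen U) {Γ : Set ℂ}
    (hΓ : ¬ IsBounded Γ) (h : ∀ x ∈ U, ∀ t ∈ Γ, eval x a * t + eval x b ≠ 0) :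
    (∀ x ∈ U, eval x a ≠ 0) ∨ a = 0 := by
  by_contra! ⟨⟨w, hwU, hwa⟩, ha⟩
  obtain ⟨t₀, ht₀⟩ : Γ.Nonempty := nonempty_of_not_isBounded hΓ
  have hwb : eval w b ≠ 0 := by simpa [hwa] using h w hwU t₀ ht₀
  have ha_ne : ¬ (eval · a) =ᶠ[𝓝 w] 0 := fun hloc => ha <| MvPolynomial.funext fun x => by
    simpa using (AnalyticOnNhd.eval_mvPolynomial a).eqOn_zero_of_preconnected_of_eventuallyEq_zero
      isPreconnected_univ (Set.mem_univ w) hloc (Set.mem_univ x)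
  have hfreq : ∃ᶠ t in cobounded ℂ, t ∈ Γ := fun hev => hΓ (isBounded_def.mpr hev)
  obtain ⟨t, ht, x, hxU, hx⟩ := (hfreq.and_eventually
    (AnalyticAt.eventually_exists_mul_add_eq_zero (AnalyticOnNhd.eval_mvPolynomial a w trivial)
      (AnalyticOnNhd.eval_mvPolynomial b w trivial) hwa hwb ha_ne (hU.mem_nhds hwU))).exists
  exact h x hxU t ht hx

variable {R : Type*} [CommSemiring R] {n : ℕ}

theorem finSuccEquiv_pderiv_zero (p : MvPolynomial (Fin (n + 1)) R) :
    finSuccEquiv R n (pderiv 0 p) = Polynomial.derivative (finSuccEquiv R n p) := by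
  induction p using MvPolynomial.induction_on with
  | C a => simp [finSuccEquiv_apply]
  | add p q hp hq => simp only [map_add, hp, hq]
  | mul_X p i hp =>
    rw [pderiv_mul, map_add, map_mul, map_mul, hp, map_mul, Polynomial.derivative_mul]
    cases i using Fin.cases with
    | zero => simp [finSuccEquiv_X_zero, add_comm]
    | succ j => simp [finSuccEquiv_X_succ, pderiv_X]

theorem finSuccEquiv_eq_of_degreeOf_le_one {p : MvPolynomial (Fin (n + 1)) R}
    (hp : p.degreeOf 0 ≤ 1) :
    finSuccEquiv R n p = Polynomial.C ((finSuccEquiv R n p).coeff 1) * Polynomial.X +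
      Polynomial.C ((finSuccEquiv R n p).coeff 0) :=
  Polynomial.eq_X_add_C_of_natDegree_le_one ((natDegree_finSuccEquiv p).trans_le hp)

theorem finSuccEquiv_pderiv_zero_of_degreeOf_le_one {p : MvPolynomial (Fin (n + 1)) R}
    (hp : p.degreeOf 0 ≤ 1) :
    finSuccEquiv R n (pderiv 0 p) = Polynomial.C ((finSuccEquiv R n p).coeff 1) := by
  rw [finSuccEquiv_pderiv_zero, finSuccEquiv_eq_of_degreeOf_le_one hp]
  simp

theorem eval_cons_of_degreeOf_le_one {p : MvPolynomial (Fin (n + 1)) R} (hp : p.degreeOf 0 ≤ 1)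
    (t : R) (x : Fin n → R) :
    eval (Fin.cons t x) p =
      eval x ((finSuccEquiv R n p).coeff 1) * t + eval x ((finSuccEquiv R n p).coeff 0) := by
  rw [eval_eq_eval_mv_eval', finSuccEquiv_eq_of_degreeOf_le_one hp]
  simp

theorem eval_pderiv_zero_of_degreeOf_le_one {p : MvPolynomial (Fin (n + 1)) R}
    (hp : p.degreeOf 0 ≤ 1) (z : Fin (n + 1) → R) :
    eval z (pderiv 0 p) = eval (Fin.tail z) ((finSuccEquiv R n p).coeff 1) := by
  rw [← Fin.cons_self_tail z, eval_eq_eval_mv_eval', finSuccEquiv_pderiv_zero_of_degreeOf_le_one hp]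
  simp

end MvPolynomial

theorem stmt2_general (n : ℕ) (P : MvPolynomial (Fin (n+1)) ℂ)
    (hma : ∀ i, P.degreeOf i ≤ 1)
    (Γ : Fin (n+1) → Set ℂ)
    (hopen : ∀ i, IsOpen (Γ i))
    (hub : ¬ Bornology.IsBounded (Γ 0))
    (hstab : ∀ z : Fin (n+1) → ℂ, (∀ i, z i ∈ Γ i) → eval z P ≠ 0) :
    (∀ z : Fin (n+1) → ℂ, (∀ i, i ≠ 0 → z i ∈ Γ i) →
        eval z (pderiv 0 P) ≠ 0) ∨
    pderiv 0 P = 0 := by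
  have hU : IsOpen (Set.univ.pi fun i : Fin n => Γ i.succ) :=
    isOpen_set_pi Set.finite_univ fun i _ => hopen i.succ
  have hstab' : ∀ x ∈ Set.univ.pi fun i : Fin n => Γ i.succ, ∀ t ∈ Γ 0,
      eval x ((finSuccEquiv ℂ n P).coeff 1) * t + eval x ((finSuccEquiv ℂ n P).coeff 0) ≠ 0 :=
    fun x hx t ht => eval_cons_of_degreeOf_le_one (hma 0) t x ▸
      hstab _ (Fin.cases ht fun i => hx i trivial)
  rcases eval_ne_zero_or_eq_zero_of_mul_add_ne_zero hU hub hstab' with h | h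
  · refine Or.inl fun z hz => ?_
    rw [eval_pderiv_zero_of_degreeOf_le_one (hma 0)]
    exact h _ fun i _ => hz i.succ i.succ_ne_zero
  · refine Or.inr ((finSuccEquiv ℂ n).injective ?_)
    rw [finSuccEquiv_pderiv_zero_of_degreeOf_le_one (hma 0), h, map_zero, map_zero]

/-- Differentiation preserves stability for multi-affine polynomials when the
region of the differentiated variable is unbounded. -/
theorem stmt2 (n : ℕ) (P : MvPolynomial (Fin (n+1)) ℂ)
    (hma : ∀ i, P.degreeOf i ≤ 1)
    (Γ : Fin (n+1) → Set ℂ)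
    (hne : ∀ i, (Γ i).Nonempty) (hopen : ∀ i, IsOpen (Γ i))
    (hconn : ∀ i, IsConnected (Γ i))
    (hub : ¬ Bornology.IsBounded (Γ 0))
    (hstab : ∀ z : Fin (n+1) → ℂ, (∀ i, z i ∈ Γ i) → eval z P ≠ 0) :
    (∀ z : Fin (n+1) → ℂ, (∀ i, i ≠ 0 → z i ∈ Γ i) →
        eval z (pderiv 0 P) ≠ 0) ∨
    pderiv 0 P = 0 :=
  stmt2_general n P hma Γ hopen hub hstab
end

section
/- Let x1,...,xn be nonzero complex numbers, viewed as vectors in ℝ², and suppose there is an angle 0 ≤ θ < 2π/3 such that for all i,j the angle between xi and xj is at most θ. Then |∑ xi| ≥ cos(θ/2) · ∑ |xi|. -/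
/-!
Normalize by one of the numbers, `x i₀`, and write `aᵢ = arg (xᵢ / x i₀)`, so that `|aᵢ| ≤ θ`.
The difference `aᵢ - aⱼ` agrees with `arg (xᵢ / xⱼ)` modulo `2π`, and the two differ by at most
`3θ < 2π`, so they are equal: all `aᵢ` lie in an interval of length `θ`. Rotating its midpoint onto
the positive real axis puts every `xᵢ` within angle `θ / 2` of it, so the real part of the rotated
sum is at least `cos (θ / 2) * ∑ ‖xᵢ‖`.
-/

open Complex Finset

theorem exists_forall_abs_sub_le_half {ι : Type*} (s : Finset ι) (a : ι → ℝ) {θ : ℝ}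
    (h : ∀ i ∈ s, ∀ j ∈ s, a i - a j ≤ θ) : ∃ m, ∀ i ∈ s, |a i - m| ≤ θ / 2 := by
  rcases s.eq_empty_or_nonempty with rfl | hs
  · exact ⟨0, by simp⟩
  obtain ⟨i, hi, hi_max⟩ := s.exists_mem_eq_sup' hs a
  obtain ⟨j, hj, hj_min⟩ := s.exists_mem_eq_inf' hs a
  refine ⟨(a i + a j) / 2, fun k hk => abs_le.mpr ⟨?_, ?_⟩⟩
  · linarith [hj_min ▸ s.inf'_le a hk, h i hi j hj]
  · linarith [hi_max ▸ s.le_sup' a hk, h i hi j hj]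

namespace Complex

theorem arg_div_eq_sub_of_abs_sub_lt {z w : ℂ} (hz : z ≠ 0) (hw : w ≠ 0)
    (h : |arg (z / w) - (arg z - arg w)| < 2 * Real.pi) : arg (z / w) = arg z - arg w := by
  obtain ⟨k, hk⟩ := Real.Angle.angle_eq_iff_two_pi_dvd_sub.mp
    ((arg_div_coe_angle hz hw).trans (Real.Angle.coe_sub _ _).symm)
  have hk0 : k = 0 := by
    rw [hk, abs_mul, abs_of_pos Real.two_pi_pos, mul_lt_iff_lt_one_right Real.two_pi_pos] at h
    exact Int.abs_lt_one_iff.mp (by exact_mod_cast h)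
  rwa [hk0, Int.cast_zero, mul_zero, sub_eq_zero] at hk

theorem arg_div_sub_arg_div_of_abs_le {z w v : ℂ} (hz : z ≠ 0) (hw : w ≠ 0) (hv : v ≠ 0)
    {θ : ℝ} (hθ : θ < 2 * Real.pi / 3) (hzv : |arg (z / v)| ≤ θ) (hwv : |arg (w / v)| ≤ θ)
    (hzw : |arg (z / w)| ≤ θ) : arg (z / v) - arg (w / v) = arg (z / w) := by
  have hdiv : z / v / (w / v) = z / w := div_div_div_cancel_right₀ hv _ _
  rw [← hdiv]
  refine (arg_div_eq_sub_of_abs_sub_lt (div_ne_zero hz hv) (div_ne_zero hw hv) ?_).symm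
  rw [hdiv, abs_sub_lt_iff]
  obtain ⟨hzv₁, hzv₂⟩ := abs_le.mp hzv
  obtain ⟨hwv₁, hwv₂⟩ := abs_le.mp hwv
  obtain ⟨hzw₁, hzw₂⟩ := abs_le.mp hzw
  constructor <;> linarith

theorem re_mul_exp_neg_mul_I (w : ℂ) (m : ℝ) :
    (w * exp (-(m * I))).re = ‖w‖ * Real.cos (arg w - m) := by
  conv_lhs => rw [← norm_mul_exp_arg_mul_I w]
  rw [mul_assoc, ← exp_add, ← sub_eq_add_neg, ← sub_mul, ← ofReal_sub, re_ofReal_mul,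
    exp_ofReal_mul_I_re]

theorem mul_sum_norm_le_norm_sum_of_le_cos {ι : Type*} (s : Finset ι) (w : ι → ℂ) (r m : ℝ)
    (h : ∀ i ∈ s, r ≤ Real.cos (arg (w i) - m)) :
    r * ∑ i ∈ s, ‖w i‖ ≤ ‖∑ i ∈ s, w i‖ :=
  calc r * ∑ i ∈ s, ‖w i‖ = ∑ i ∈ s, r * ‖w i‖ := mul_sum _ _ _
    _ ≤ ∑ i ∈ s, (w i * exp (-(m * I))).re := sum_le_sum fun i hi => by
        rw [re_mul_exp_neg_mul_I, mul_comm r]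
        exact mul_le_mul_of_nonneg_left (h i hi) (norm_nonneg _)
    _ = ((∑ i ∈ s, w i) * exp (-(m * I))).re := by rw [sum_mul, re_sum]
    _ ≤ ‖(∑ i ∈ s, w i) * exp (-(m * I))‖ := re_le_norm _
    _ = ‖∑ i ∈ s, w i‖ := by
        rw [norm_mul, ← neg_mul, ← ofReal_neg, norm_exp_ofReal_mul_I, mul_one]

theorem mul_sum_norm_le_norm_sum_of_le_cos_arg_div {ι : Type*} (s : Finset ι) (z : ι → ℂ)
    {v : ℂ} (hv : v ≠ 0) (r m : ℝ) (h : ∀ i ∈ s, r ≤ Real.cos (arg (z i / v) - m)) :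
    r * ∑ i ∈ s, ‖z i‖ ≤ ‖∑ i ∈ s, z i‖ := by
  have key := mul_sum_norm_le_norm_sum_of_le_cos s (fun i => z i / v) r m h
  simp only [norm_div, ← sum_div] at key
  rwa [← mul_div_assoc, div_le_div_iff_of_pos_right (norm_pos_iff.mpr hv)] at key

end Complex

theorem stmt4_general (n : ℕ) (x : Fin n → ℂ) (hx : ∀ i, x i ≠ 0)
    (θ : ℝ) (hθ : θ < 2 * Real.pi / 3)
    (hang : ∀ i j, |Complex.arg (x i / x j)| ≤ θ) :
    Real.cos (θ / 2) * ∑ i, ‖x i‖ ≤ ‖∑ i, x i‖ := by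
  rcases isEmpty_or_nonempty (Fin n) with _ | ⟨⟨i₀⟩⟩
  · simp
  have hspread : ∀ i ∈ univ, ∀ j ∈ univ, arg (x i / x i₀) - arg (x j / x i₀) ≤ θ := by
    intro i _ j _
    rw [arg_div_sub_arg_div_of_abs_le (hx i) (hx j) (hx i₀) hθ (hang i i₀) (hang j i₀) (hang i j)]
    exact le_of_abs_le (hang i j)
  obtain ⟨m, hm⟩ := exists_forall_abs_sub_le_half univ (fun i => arg (x i / x i₀)) hspread
  refine mul_sum_norm_le_norm_sum_of_le_cos_arg_div univ x (hx i₀) _ m fun i hi => ?_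
  rw [← Real.cos_abs (arg (x i / x i₀) - m)]
  exact Real.cos_le_cos_of_nonneg_of_le_pi (abs_nonneg _) (by linarith [Real.pi_pos]) (hm i hi)

/-- The angle lemma: if nonzero complex numbers pairwise make an angle at most
θ < 2π/3, then the modulus of their sum is at least cos(θ/2) times the sum of
their moduli. -/
theorem stmt4 (n : ℕ) (x : Fin n → ℂ) (hx : ∀ i, x i ≠ 0)
    (θ : ℝ) (hθ0 : 0 ≤ θ) (hθ : θ < 2 * Real.pi / 3)
    (hang : ∀ i j, |Complex.arg (x i / x j)| ≤ θ) :
    Real.cos (θ / 2) * ∑ i, ‖x i‖ ≤ ‖∑ i, x i‖ :=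
  stmt4_general n x hx θ hθ hang
end

section
/- For every ε > 0, the region Γ = ℂ \ (−H̄ε²), where H̄ε = {x+iy : x ≤ −ε} and H̄ε² = {zw : z,w ∈ H̄ε}, equals the open parabolic region {x+iy : y² < 4ε²(x+ε²)}; in particular Γ contains the positive real axis. -/
open Pointwise

/-- The complement of the negated Minkowski square of the closed half-plane
`{Re z ≤ -ε}` is the open parabolic region `{y² < 4ε²(x+ε²)}`; in particular
it contains the positive real axis. -/
theorem stmt5 (ε : ℝ) (hε : 0 < ε) :
    (-({z : ℂ | z.re ≤ -ε} * {z : ℂ | z.re ≤ -ε}))ᶜ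
      = {z : ℂ | z.im ^ 2 < 4 * ε ^ 2 * (z.re + ε ^ 2)} ∧
    ∀ x : ℝ, 0 < x →
      (x : ℂ) ∈ (-({z : ℂ | z.re ≤ -ε} * {z : ℂ | z.re ≤ -ε}))ᶜ := by
  have key : ∀ z : ℂ, z ∈ -({z : ℂ | z.re ≤ -ε} * {z : ℂ | z.re ≤ -ε}) ↔
      4 * ε ^ 2 * (z.re + ε ^ 2) ≤ z.im ^ 2 := by
    intro z
    rw [Set.mem_neg, Set.mem_mul]
    constructor
    · rintro ⟨a, ha, b, hb, hab⟩
      simp only [Set.mem_setOf_eq] at ha hb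
      have hzre : z.re = a.im * b.im - a.re * b.re := by
        have := congrArg Complex.re hab
        simp [Complex.mul_re] at this
        linarith
      have hzim : z.im = -(a.re * b.im) - a.im * b.re := by
        have := congrArg Complex.im hab
        simp [Complex.mul_im] at this
        linarith
      have huv : ε ^ 2 ≤ a.re * b.re := by nlinarith
      rw [hzre, hzim]
      rcases le_or_gt 0 (a.im * b.im) with h | h
      · nlinarith [sq_nonneg (a.re * b.im - a.im * b.re),
          mul_nonneg (by nlinarith [sq_nonneg ε] : (0:ℝ) ≤ a.im * b.im + ε ^ 2)
            (by linarith : (0:ℝ) ≤ a.re * b.re - ε ^ 2)]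
      · nlinarith [sq_nonneg (a.re * b.im + a.im * b.re)]
    · intro h
      have hd0 : 0 ≤ z.im ^ 2 - 4 * ε ^ 2 * (z.re + ε ^ 2) := by linarith
      set d := Real.sqrt (z.im ^ 2 - 4 * ε ^ 2 * (z.re + ε ^ 2)) with hd_def
      have hd : d ^ 2 = z.im ^ 2 - 4 * ε ^ 2 * (z.re + ε ^ 2) := Real.sq_sqrt hd0
      have hεne : (ε : ℝ) ≠ 0 := ne_of_gt hε
      refine ⟨⟨-ε, (z.im + d) / (2 * ε)⟩, le_refl (-ε),
        ⟨-ε, (z.im - d) / (2 * ε)⟩, le_refl (-ε), ?_⟩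
      apply Complex.ext
      · simp only [Complex.mul_re, Complex.neg_re]
        field_simp
        ring_nf
        nlinarith [hd]
      · simp only [Complex.mul_im, Complex.neg_im]
        field_simp
        ring
  have heq : (-({z : ℂ | z.re ≤ -ε} * {z : ℂ | z.re ≤ -ε}))ᶜ
      = {z : ℂ | z.im ^ 2 < 4 * ε ^ 2 * (z.re + ε ^ 2)} := by
    ext z
    simp only [Set.mem_compl_iff, key z, not_le, Set.mem_setOf_eq]
  refine ⟨heq, fun x hx => ?_⟩
  rw [heq]
  simp only [Set.mem_setOf_eq, Complex.ofReal_re, Complex.ofReal_im]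
  nlinarith [sq_nonneg ε, mul_pos hε hε]
end

section
/- For ε > 0, let Γ = {x+iy : y² < 4ε²(x+ε²)} ⊆ ℂ. Then for every λ ∈ ℝ with λ > 0, the distance from λ to the boundary of Γ equals λ + ε² if 0 < λ < ε², and equals 2ε√λ if λ ≥ ε². -/
open Metric Complex Filter

lemma parab_frontier (ε : ℝ) (hε : 0 < ε) :
    frontier {z : ℂ | z.im ^ 2 < 4 * ε ^ 2 * (z.re + ε ^ 2)}
      = {z : ℂ | z.im ^ 2 = 4 * ε ^ 2 * (z.re + ε ^ 2)} := by
  have hf : Continuous fun z : ℂ => z.im ^ 2 := by fun_prop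
  have hg : Continuous fun z : ℂ => 4 * ε ^ 2 * (z.re + ε ^ 2) := by fun_prop
  apply Set.Subset.antisymm
  · exact frontier_lt_subset_eq hf hg
  · intro z hz
    simp only [Set.mem_setOf_eq] at hz
    have hopen : IsOpen {z : ℂ | z.im ^ 2 < 4 * ε ^ 2 * (z.re + ε ^ 2)} :=
      isOpen_lt hf hg
    rw [frontier, hopen.interior_eq]
    constructor
    · -- z in closure: approach from the right
      have h1 : Tendsto (fun n : ℕ => (1 / (n + 1 : ℝ))) atTop (nhds 0) :=
        tendsto_one_div_add_atTop_nhds_zero_nat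
      have h2 : Tendsto (fun n : ℕ => (((1 / (n + 1 : ℝ)) : ℝ) : ℂ)) atTop (nhds ((0:ℝ):ℂ)) :=
        (Complex.continuous_ofReal.tendsto 0).comp h1
      rw [Complex.ofReal_zero] at h2
      have h3 : Tendsto (fun n : ℕ => z + (((1 / (n + 1 : ℝ)) : ℝ) : ℂ)) atTop (nhds z) := by
        simpa using tendsto_const_nhds.add h2
      refine mem_closure_of_tendsto h3 ?_
      filter_upwards with n
      have hpos : (0 : ℝ) < 1 / (n + 1 : ℝ) := by positivity
      simp only [Set.mem_setOf_eq, Complex.add_re, Complex.add_im, Complex.ofReal_re,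
        Complex.ofReal_im, add_zero]
      nlinarith [mul_pos (by positivity : (0:ℝ) < 4 * ε ^ 2) hpos]
    · simp only [Set.mem_setOf_eq]
      intro h
      exact absurd hz (ne_of_lt h)

/-- Distance from a positive real point to the boundary of the parabolic region
`{y² < 4ε²(x+ε²)}`. -/
theorem stmt6 (ε : ℝ) (hε : 0 < ε) (lam : ℝ) (hlam : 0 < lam) :
    (lam < ε ^ 2 →
      Metric.infDist (lam : ℂ)
        (frontier {z : ℂ | z.im ^ 2 < 4 * ε ^ 2 * (z.re + ε ^ 2)})
        = lam + ε ^ 2) ∧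
    (ε ^ 2 ≤ lam →
      Metric.infDist (lam : ℂ)
        (frontier {z : ℂ | z.im ^ 2 < 4 * ε ^ 2 * (z.re + ε ^ 2)})
        = 2 * ε * Real.sqrt lam) := by
  rw [parab_frontier ε hε]
  set E : Set ℂ := {z : ℂ | z.im ^ 2 = 4 * ε ^ 2 * (z.re + ε ^ 2)} with hE
  constructor
  · -- case lam < ε²
    intro hcase
    have hw : ((-ε ^ 2 : ℝ) : ℂ) ∈ E := by
      simp only [hE, Set.mem_setOf_eq, Complex.ofReal_re, Complex.ofReal_im]
      ring
    have hne : E.Nonempty := ⟨_, hw⟩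
    have hdist : dist (lam : ℂ) ((-ε ^ 2 : ℝ) : ℂ) = lam + ε ^ 2 := by
      rw [Complex.dist_eq_re_im]
      simp only [Complex.ofReal_re, Complex.ofReal_im, sub_zero]
      rw [show (lam - -ε ^ 2) ^ 2 + 0 ^ 2 = (lam + ε ^ 2) ^ 2 by ring]
      exact Real.sqrt_sq (by positivity)
    apply le_antisymm
    · calc infDist (lam : ℂ) E ≤ dist (lam : ℂ) ((-ε ^ 2 : ℝ) : ℂ) :=
            infDist_le_dist_of_mem hw
        _ = lam + ε ^ 2 := hdist
    · by_contra h
      rw [not_le] at h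
      obtain ⟨y, hy, hylt⟩ := (infDist_lt_iff hne).mp h
      simp only [hE, Set.mem_setOf_eq] at hy
      have hx : 0 ≤ y.re + ε ^ 2 := by nlinarith [sq_nonneg y.im]
      have hle : lam + ε ^ 2 ≤ dist (lam : ℂ) y := by
        rw [Complex.dist_eq_re_im]
        rw [Real.le_sqrt (by positivity) (by positivity)]
        simp only [Complex.ofReal_re, Complex.ofReal_im]
        nlinarith [mul_nonneg hx (by nlinarith : (0:ℝ) ≤ y.re + 3 * ε ^ 2 - 2 * lam)]
      linarith
  · -- case ε² ≤ lam
    intro hcase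
    have hsub : (0 : ℝ) ≤ lam - ε ^ 2 := by linarith
    set w : ℂ := ((lam - 2 * ε ^ 2 : ℝ) : ℂ) + ((2 * ε * Real.sqrt (lam - ε ^ 2) : ℝ) : ℂ) * Complex.I with hwdef
    have hwre : w.re = lam - 2 * ε ^ 2 := by
      simp only [hwdef, Complex.add_re, Complex.ofReal_re, Complex.mul_re,
        Complex.I_re, Complex.I_im, Complex.ofReal_im]
      ring
    have hwim : w.im = 2 * ε * Real.sqrt (lam - ε ^ 2) := by
      simp only [hwdef, Complex.add_im, Complex.ofReal_im, Complex.mul_im,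
        Complex.I_re, Complex.I_im, Complex.ofReal_re]
      ring
    have hw : w ∈ E := by
      simp only [hE, Set.mem_setOf_eq, hwre, hwim]
      rw [show (2 * ε * Real.sqrt (lam - ε ^ 2)) ^ 2
            = 4 * ε ^ 2 * (Real.sqrt (lam - ε ^ 2)) ^ 2 by ring,
        Real.sq_sqrt hsub]
      ring
    have hne : E.Nonempty := ⟨_, hw⟩
    have hsq : Real.sqrt (4 * ε ^ 2 * lam) = 2 * ε * Real.sqrt lam := by
      rw [show (4 : ℝ) * ε ^ 2 * lam = (2 * ε) ^ 2 * lam by ring,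
        Real.sqrt_mul (by positivity), Real.sqrt_sq (by positivity)]
    have hdist : dist (lam : ℂ) w = 2 * ε * Real.sqrt lam := by
      rw [Complex.dist_eq_re_im, hwre, hwim]
      simp only [Complex.ofReal_re, Complex.ofReal_im]
      rw [show (lam - (lam - 2 * ε ^ 2)) ^ 2 + (0 - 2 * ε * Real.sqrt (lam - ε ^ 2)) ^ 2
            = 4 * ε ^ 4 + 4 * ε ^ 2 * (Real.sqrt (lam - ε ^ 2)) ^ 2 by ring,
        Real.sq_sqrt hsub, show 4 * ε ^ 4 + 4 * ε ^ 2 * (lam - ε ^ 2) = 4 * ε ^ 2 * lam by ring]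
      exact hsq
    apply le_antisymm
    · calc infDist (lam : ℂ) E ≤ dist (lam : ℂ) w := infDist_le_dist_of_mem hw
        _ = 2 * ε * Real.sqrt lam := hdist
    · by_contra h
      rw [not_le] at h
      obtain ⟨y, hy, hylt⟩ := (infDist_lt_iff hne).mp h
      simp only [hE, Set.mem_setOf_eq] at hy
      have hle : 2 * ε * Real.sqrt lam ≤ dist (lam : ℂ) y := by
        rw [Complex.dist_eq_re_im]
        rw [Real.le_sqrt (by positivity) (by positivity)]
        simp only [Complex.ofReal_re, Complex.ofReal_im]
        have hsq2 : (2 * ε * Real.sqrt lam) ^ 2 = 4 * ε ^ 2 * lam := by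
          rw [show (2 * ε * Real.sqrt lam) ^ 2 = 4 * ε ^ 2 * (Real.sqrt lam) ^ 2 by ring,
            Real.sq_sqrt hlam.le]
        rw [hsq2]
        nlinarith [sq_nonneg (lam - y.re - 2 * ε ^ 2)]
      linarith
end

section
/- Fix reals β > 0, γ > 0 with βγ < 1. For each positive integer d define P_d(z) = ∑_{k=0}^d C(d,k) β^{C(k,2)} γ^{C(d−k,2)} z^k. Then for every d ≥ 2, all roots of P_d are distinct, real, and strictly negative. -/
/-!
Write `P_d = edgePoly β γ d`. Substituting `z = γ^(d-1) x` turns `P_d` into `γ^C(d,2)` times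
`H_d(x) = ∑ C(d,k) q^C(k,2) x^k = edgePoly q 1 d`, where `q = βγ ∈ (0,1)`, and these satisfy
`H_{d+1}(x) = H_d(x) + x H_d(qx)`. By induction, the roots of `H_d` are `r_0 < ⋯ < r_{d-1} < 0`
with `q r_i < r_{i+1}`. Indeed, the recurrence gives `H_{d+1}(r_i / q) = H_d(r_i / q)` and
`H_{d+1}(r_i) = r_i H_d(q r_i)`, whose signs are read off from the factorisation of `H_d`;
together with `H_{d+1}(0) = 1` and the sign at `-∞`, this shows that `H_{d+1}` changes sign on
each of the `d + 1` disjoint intervals `(r_{i-1}, r_i / q)` (with `r_{-1} = -∞` and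
`r_d / q = 0`), and a root `t_i` in each of them satisfies `q t_i < r_i < t_{i+1}`.
-/

open Polynomial Finset Filter Asymptotics

theorem strictMonoOn_Iio_of_lt_add_one {α : Type*} [Preorder α] {f : ℕ → α} {n : ℕ}
    (hf : ∀ i, i + 1 < n → f i < f (i + 1)) : StrictMonoOn f (Set.Iio n) :=
  strictMonoOn_of_lt_succ Set.ordConnected_Iio fun i _ _ hi => hf i hi

theorem mul_neg_of_neg_one_pow_mul_pos {a b : ℝ} (n : ℕ) (ha : 0 < (-1) ^ (n + 1) * a)
    (hb : 0 < (-1) ^ n * b) : a * b < 0 := by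
  rcases neg_one_pow_eq_or ℝ n with h | h <;> simp only [pow_succ, h] at ha hb <;> nlinarith

theorem neg_one_pow_mul_prod_sub_pos {r : ℕ → ℝ} {x : ℝ} {i d : ℕ} (hid : i ≤ d)
    (hbelow : ∀ j < i, r j < x) (habove : ∀ j, i ≤ j → j < d → x < r j) :
    0 < (-1) ^ (d - i) * ∏ j ∈ range d, (x - r j) := by
  induction d, hid using Nat.le_induction with
  | base =>
    simpa using prod_pos fun j hj => sub_pos.mpr (hbelow j (mem_range.mp hj))
  | succ d hid ih =>
    have hpos := ih fun j hij hjd => habove j hij (by omega)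
    have hneg : x - r d < 0 := sub_neg.mpr (habove d hid (by omega))
    rw [prod_range_succ, Nat.sub_add_comm hid, pow_succ]
    nlinarith

namespace Polynomial

theorem exists_mem_Ioo_eval_eq_zero_of_mul_neg (F : ℝ[X]) {a b : ℝ} (hab : a < b)
    (h : F.eval a * F.eval b < 0) : ∃ x ∈ Set.Ioo a b, F.eval x = 0 := by
  have hF : ContinuousOn (fun x => F.eval x) (Set.Icc a b) := F.continuous.continuousOn
  rcases mul_neg_iff.mp h with ⟨ha, hb⟩ | ⟨ha, hb⟩
  · exact intermediate_value_Ioo' hab.le hF ⟨hb, ha⟩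
  · exact intermediate_value_Ioo hab.le hF ⟨ha, hb⟩

theorem exists_roots_eq_map_of_sign_changes {F : ℝ[X]} {n : ℕ} (hdeg : F.natDegree ≤ n)
    {a b : ℕ → ℝ} (hlt : ∀ i < n, a i < b i) (hle : ∀ i, i + 1 < n → b i ≤ a (i + 1))
    (hsign : ∀ i < n, F.eval (a i) * F.eval (b i) < 0) :
    ∃ t : ℕ → ℝ, (∀ i < n, t i ∈ Set.Ioo (a i) (b i)) ∧
      F.roots = (Multiset.range n).map t := by
  choose! t ht hroot using fun i (hi : i < n) =>
    F.exists_mem_Ioo_eval_eq_zero_of_mul_neg (hlt i hi) (hsign i hi)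
  refine ⟨t, ht, ?_⟩
  have hmono : StrictMonoOn t (Set.Iio n) := strictMonoOn_Iio_of_lt_add_one fun i hi =>
    ((ht i (by omega)).2.trans_le (hle i hi)).trans (ht (i + 1) hi).1
  have hnodup : ((Multiset.range n).map t).Nodup :=
    (Multiset.nodup_range n).map_on fun i hi j hj =>
      hmono.injOn (Multiset.mem_range.mp hi) (Multiset.mem_range.mp hj)
  rcases Nat.eq_zero_or_pos n with rfl | hn
  · rw [eq_C_of_natDegree_eq_zero (Nat.le_zero.mp hdeg), roots_C]
    rfl
  have hF : F ≠ 0 := by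
    rintro rfl
    simpa using hsign 0 hn
  refine (Multiset.eq_of_le_of_card_le ((Multiset.le_iff_subset hnodup).mpr fun x hx => ?_) ?_).symm
  · obtain ⟨i, hi, rfl⟩ := Multiset.mem_map.mp hx
    exact (mem_roots hF).mpr (hroot i (Multiset.mem_range.mp hi))
  · simpa using (card_roots' F).trans hdeg

theorem eval_eq_leadingCoeff_mul_prod_of_roots_eq {p : ℝ[X]} {d : ℕ} {r : ℕ → ℝ}
    (hroots : p.roots = (Multiset.range d).map r) (hdeg : p.natDegree = d) (x : ℝ) :
    p.eval x = p.leadingCoeff * ∏ j ∈ range d, (x - r j) := by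
  have hcard : p.roots.card = p.natDegree := by simp [hroots, hdeg]
  conv_lhs => rw [← C_leadingCoeff_mul_prod_multiset_X_sub_C hcard]
  simp [hroots, eval_multiset_prod, Finset.prod_eq_multiset_prod]

theorem neg_one_pow_mul_eval_pos_of_roots_eq {p : ℝ[X]} {d : ℕ} {r : ℕ → ℝ}
    (hroots : p.roots = (Multiset.range d).map r) (hdeg : p.natDegree = d)
    (hlc : 0 < p.leadingCoeff) {x : ℝ} {i : ℕ} (hid : i ≤ d)
    (hbelow : ∀ j < i, r j < x) (habove : ∀ j, i ≤ j → j < d → x < r j) :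
    0 < (-1) ^ (d - i) * p.eval x := by
  rw [eval_eq_leadingCoeff_mul_prod_of_roots_eq hroots hdeg, mul_left_comm]
  exact mul_pos hlc (neg_one_pow_mul_prod_sub_pos hid hbelow habove)

theorem exists_lt_neg_one_pow_mul_eval_pos {F : ℝ[X]} (hlc : 0 < F.leadingCoeff) (c : ℝ) :
    ∃ w < c, 0 < (-1) ^ F.natDegree * F.eval w := by
  have hequiv : (fun x => (-1) ^ F.natDegree * F.eval x) ~[atBot]
      fun x => F.leadingCoeff * (-x) ^ F.natDegree := by
    refine ((IsEquivalent.refl (u := fun _ => ((-1 : ℝ) ^ F.natDegree))).mul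
      F.isEquivalent_atBot_lead).congr_right (Eventually.of_forall fun x => ?_)
    simp only [Pi.mul_apply, neg_pow x]
    ring
  have hpos : ∀ᶠ x in atBot, 0 < F.leadingCoeff * (-x) ^ F.natDegree :=
    (eventually_lt_atBot 0).mono fun x hx => mul_pos hlc (pow_pos (neg_pos.mpr hx) _)
  exact ((hequiv.eventually_pos hpos).and (eventually_lt_atBot c)).exists.imp
    fun w hw => ⟨hw.2, hw.1⟩

end Polynomial

noncomputable def edgePoly (β γ : ℝ) (d : ℕ) : ℝ[X] :=
  ∑ k ∈ range (d + 1), C ((d.choose k : ℝ) * β ^ k.choose 2 * γ ^ (d - k).choose 2) * X ^ k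

theorem coeff_edgePoly (β γ : ℝ) (d k : ℕ) :
    (edgePoly β γ d).coeff k = d.choose k * β ^ k.choose 2 * γ ^ (d - k).choose 2 := by
  simp only [edgePoly, finsetSum_coeff, coeff_C_mul_X_pow, sum_ite_eq, ite_eq_left_iff, mem_range]
  intro hk
  rw [Nat.choose_eq_zero_of_lt (by omega), Nat.cast_zero, zero_mul, zero_mul]

theorem natDegree_edgePoly {β : ℝ} (hβ : β ≠ 0) (γ : ℝ) (d : ℕ) :
    (edgePoly β γ d).natDegree = d :=
  natDegree_eq_of_le_of_coeff_ne_zero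
    (natDegree_le_iff_coeff_eq_zero.mpr fun k hk => by
      simp [coeff_edgePoly, Nat.choose_eq_zero_of_lt hk])
    (by simp [coeff_edgePoly, hβ])

theorem leadingCoeff_edgePoly {β : ℝ} (hβ : β ≠ 0) (γ : ℝ) (d : ℕ) :
    (edgePoly β γ d).leadingCoeff = β ^ d.choose 2 := by
  simp [leadingCoeff, natDegree_edgePoly hβ, coeff_edgePoly]

theorem eval_zero_edgePoly (β γ : ℝ) (d : ℕ) :
    (edgePoly β γ d).eval 0 = γ ^ d.choose 2 := by
  simp [← coeff_zero_eq_eval_zero, coeff_edgePoly]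

theorem eval_edgePoly_one_succ (q : ℝ) (d : ℕ) (x : ℝ) :
    (edgePoly q 1 (d + 1)).eval x =
      (edgePoly q 1 d).eval x + x * (edgePoly q 1 d).eval (q * x) := by
  simp only [edgePoly, eval_finsetSum, eval_C_mul, eval_X_pow, one_pow, mul_one, mul_assoc,
    sum_choose_succ_mul (fun k _ => q ^ k.choose 2 * x ^ k), mul_sum]
  congr 1
  refine sum_congr rfl fun k _ => ?_
  rw [Nat.choose_succ_succ', Nat.choose_one_right]
  ring

theorem choose_two_add_choose_two_sub {d k : ℕ} (hk : k ≤ d) :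
    d.choose 2 + (d - k).choose 2 = k.choose 2 + (d - 1) * (d - k) := by
  obtain ⟨m, rfl⟩ := Nat.exists_eq_add_of_le hk
  rcases m with _ | m
  · simp
  rw [Nat.add_sub_cancel_left, show k + (m + 1) - 1 = k + m by omega, ← Nat.cast_inj (R := ℚ)]
  push_cast [Nat.cast_choose_two]
  ring

theorem scaleRoots_edgePoly {β : ℝ} (γ : ℝ) (hβγ : β * γ ≠ 0) (d : ℕ) :
    (edgePoly (β * γ) 1 d).scaleRoots (γ ^ (d - 1)) =
      C (γ ^ d.choose 2) * edgePoly β γ d := by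
  ext k
  rw [coeff_scaleRoots, natDegree_edgePoly hβγ, coeff_C_mul, coeff_edgePoly, coeff_edgePoly]
  rcases le_or_gt k d with hk | hk
  · have hexp := congrArg (γ ^ ·) (choose_two_add_choose_two_sub hk)
    simp only [pow_add] at hexp
    rw [one_pow, mul_one, mul_pow, ← pow_mul]
    linear_combination (d.choose k * β ^ k.choose 2 : ℝ) * hexp.symm
  · simp [Nat.choose_eq_zero_of_lt hk]

theorem roots_edgePoly {β γ : ℝ} (hβγ : β * γ ≠ 0) {d : ℕ} {r : ℕ → ℝ}
    (hr : (edgePoly (β * γ) 1 d).roots = (Multiset.range d).map r) :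
    (edgePoly β γ d).roots = (Multiset.range d).map fun i => γ ^ (d - 1) * r i := by
  have hc : γ ^ d.choose 2 ≠ 0 := pow_ne_zero _ (right_ne_zero_of_mul hβγ)
  rw [← roots_C_mul _ hc, ← scaleRoots_edgePoly γ hβγ,
    roots_scaleRoots _ (pow_ne_zero _ (right_ne_zero_of_mul hβγ)).isUnit, hr, Multiset.map_map]
  rfl

structure IsQSeparatedRoots (q : ℝ) (p : ℝ[X]) (d : ℕ) (r : ℕ → ℝ) : Prop where
  roots_eq : p.roots = (Multiset.range d).map r
  neg : ∀ i < d, r i < 0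
  mul_lt_succ : ∀ i, i + 1 < d → q * r i < r (i + 1)

namespace IsQSeparatedRoots

variable {q : ℝ} {p : ℝ[X]} {d : ℕ} {r : ℕ → ℝ}

theorem lt_mul (h : IsQSeparatedRoots q p d r) (hq : q < 1) {i : ℕ} (hi : i < d) :
    r i < q * r i := by
  nlinarith [h.neg i hi]

theorem mul_lt (h : IsQSeparatedRoots q p d r) (hq : q < 1) {i j : ℕ} (hij : i < j) (hj : j < d) :
    q * r i < r j := by
  induction j, hij using Nat.le_induction with
  | base => exact h.mul_lt_succ i hj
  | succ j hij ih =>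
    exact (ih (by omega)).trans ((h.lt_mul hq (by omega)).trans (h.mul_lt_succ j hj))

theorem strictMonoOn (h : IsQSeparatedRoots q p d r) (hq : q < 1) : StrictMonoOn r (Set.Iio d) :=
  strictMonoOn_Iio_of_lt_add_one fun i hi => (h.lt_mul hq (by omega)).trans (h.mul_lt_succ i hi)

theorem eval_eq_zero (h : IsQSeparatedRoots q p d r) {i : ℕ} (hi : i < d) : p.eval (r i) = 0 :=
  isRoot_of_mem_roots (h.roots_eq ▸ Multiset.mem_map_of_mem r (Multiset.mem_range.mpr hi))

theorem neg_one_pow_mul_eval_edgePoly_pos (h : IsQSeparatedRoots q (edgePoly q 1 d) d r)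
    (hq0 : 0 < q) {x : ℝ} {i : ℕ} (hid : i ≤ d)
    (hbelow : ∀ j < i, r j < x) (habove : ∀ j, i ≤ j → j < d → x < r j) :
    0 < (-1) ^ (d - i) * (edgePoly q 1 d).eval x :=
  neg_one_pow_mul_eval_pos_of_roots_eq h.roots_eq (natDegree_edgePoly hq0.ne' 1 d)
    (by rw [leadingCoeff_edgePoly hq0.ne']; positivity) hid hbelow habove

theorem div_lt (h : IsQSeparatedRoots q p d r) (hq0 : 0 < q) (hq1 : q < 1) {i : ℕ}
    (hi : i < d) : r i / q < r i := by
  rw [div_lt_iff₀ hq0, mul_comm]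
  exact h.lt_mul hq1 hi

theorem neg_one_pow_mul_eval_edgePoly_succ_div_pos (h : IsQSeparatedRoots q (edgePoly q 1 d) d r)
    (hq0 : 0 < q) (hq1 : q < 1) {i : ℕ} (hi : i < d) :
    0 < (-1) ^ (d - i) * (edgePoly q 1 (d + 1)).eval (r i / q) := by
  rw [eval_edgePoly_one_succ, mul_div_cancel₀ _ hq0.ne', h.eval_eq_zero hi, mul_zero, add_zero]
  refine h.neg_one_pow_mul_eval_edgePoly_pos hq0 hi.le
    (fun j hj => (lt_div_iff₀' hq0).mpr (h.mul_lt hq1 hj hi)) fun j hij hj => ?_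
  exact (h.div_lt hq0 hq1 hi).trans_le ((h.strictMonoOn hq1).monotoneOn hi hj hij)

theorem neg_one_pow_mul_eval_edgePoly_succ_pos (h : IsQSeparatedRoots q (edgePoly q 1 d) d r)
    (hq0 : 0 < q) (hq1 : q < 1) {i : ℕ} (hi : i < d) :
    0 < (-1) ^ (d - i) * (edgePoly q 1 (d + 1)).eval (r i) := by
  rw [eval_edgePoly_one_succ, h.eval_eq_zero hi, zero_add]
  have hpos := h.neg_one_pow_mul_eval_edgePoly_pos hq0 (x := q * r i) (i := i + 1) hi
    (fun j hj => ((h.strictMonoOn hq1).monotoneOn (show j < d by omega) hi (by omega)).trans_lt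
      (h.lt_mul hq1 hi))
    fun j hij hj => h.mul_lt hq1 (by omega) hj
  rw [show d - i = d - (i + 1) + 1 by omega, pow_succ]
  nlinarith [h.neg i hi]

theorem edgePoly_succ (h : IsQSeparatedRoots q (edgePoly q 1 d) d r) (hq0 : 0 < q)
    (hq1 : q < 1) :
    ∃ t, IsQSeparatedRoots q (edgePoly q 1 (d + 1)) (d + 1) t := by
  set F := edgePoly q 1 (d + 1)
  let b : ℕ → ℝ := fun i => if i < d then r i / q else 0
  obtain ⟨w, hw, sign_w⟩ := exists_lt_neg_one_pow_mul_eval_pos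
    (F := F) (by rw [leadingCoeff_edgePoly hq0.ne']; positivity) (b 0)
  rw [natDegree_edgePoly hq0.ne'] at sign_w
  let a : ℕ → ℝ := fun i => if i = 0 then w else r (i - 1)
  have sign_a : ∀ i ≤ d, 0 < (-1) ^ (d - i + 1) * F.eval (a i) := by
    rintro (_ | i) hid
    · simpa [a] using sign_w
    · simpa [a, show d - (i + 1) + 1 = d - i by omega] using
        h.neg_one_pow_mul_eval_edgePoly_succ_pos hq0 hq1 (i := i) (by omega)
  have sign_b : ∀ i ≤ d, 0 < (-1) ^ (d - i) * F.eval (b i) := by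
    intro i hid
    rcases hid.lt_or_eq with hid | rfl
    · simpa [b, hid] using h.neg_one_pow_mul_eval_edgePoly_succ_div_pos hq0 hq1 hid
    · simp [b, F, eval_zero_edgePoly]
  have ha_lt_b : ∀ i < d + 1, a i < b i := by
    rintro (_ | i) hid
    · exact hw
    · simp only [a, b, Nat.add_sub_cancel, if_neg (Nat.succ_ne_zero i)]
      split_ifs with hd
      · rw [lt_div_iff₀' hq0]; exact h.mul_lt_succ i hd
      · exact h.neg i (by omega)
  have hb_le_a : ∀ i, i + 1 < d + 1 → b i ≤ a (i + 1) := fun i hid => by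
    simpa [a, b, show i < d by omega] using (h.div_lt hq0 hq1 (i := i) (by omega)).le
  obtain ⟨t, ht, hroots⟩ := exists_roots_eq_map_of_sign_changes
    (natDegree_edgePoly hq0.ne' 1 (d + 1)).le ha_lt_b hb_le_a
    fun i hid => mul_neg_of_neg_one_pow_mul_pos (d - i) (sign_a i (by omega)) (sign_b i (by omega))
  refine ⟨t, hroots, fun i hid => (ht i hid).2.trans_le ?_, fun i hid => ?_⟩
  · by_cases hd : i < d
    · simpa [b, hd] using (div_neg_of_neg_of_pos (h.neg i hd) hq0).le
    · simp [b, hd]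
  · have hti : t i < r i / q := by simpa [b, show i < d by omega] using (ht i (by omega)).2
    have hrt : r i < t (i + 1) := by simpa [a] using (ht (i + 1) hid).1
    calc q * t i < r i := by rwa [← lt_div_iff₀' hq0]
      _ < t (i + 1) := hrt

end IsQSeparatedRoots

theorem exists_isQSeparatedRoots_edgePoly {q : ℝ} (hq0 : 0 < q) (hq1 : q < 1) (d : ℕ) :
    ∃ r, IsQSeparatedRoots q (edgePoly q 1 d) d r := by
  induction d with
  | zero => exact ⟨0, by simp [edgePoly], by simp, by simp⟩
  | succ d ih =>
    obtain ⟨r, hr⟩ := ih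
    exact hr.edgePoly_succ hq0 hq1

theorem stmt7_general (β γ : ℝ) (hβ : 0 < β) (hγ : 0 < γ) (h : β * γ < 1)
    (d : ℕ) (P : Polynomial ℂ)
    (hP : P = ∑ k ∈ Finset.range (d + 1),
      Polynomial.C
        (((d.choose k : ℝ) * β ^ (k.choose 2) * γ ^ ((d - k).choose 2) : ℝ) : ℂ)
        * Polynomial.X ^ k) :
    P.roots.card = d ∧ P.roots.Nodup ∧
      ∀ z ∈ P.roots, z.im = 0 ∧ z.re < 0 := by
  have hβγ : β * γ ≠ 0 := (mul_pos hβ hγ).ne'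
  obtain ⟨r, hr⟩ := exists_isQSeparatedRoots_edgePoly (mul_pos hβ hγ) h d
  have hE := roots_edgePoly hβγ hr.roots_eq
  have hsplit : (edgePoly β γ d).Splits := by
    rw [splits_iff_card_roots, hE, natDegree_edgePoly hβ.ne']
    simp
  have hPE : P = (edgePoly β γ d).map Complex.ofRealHom := by
    simp [hP, edgePoly, Polynomial.map_sum]
  have hroots : P.roots = (Multiset.range d).map fun i => ((γ ^ (d - 1) * r i : ℝ) : ℂ) := by
    rw [hPE, hsplit.roots_map_of_injective Complex.ofReal_injective, hE, Multiset.map_map]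
    rfl
  refine ⟨by simp [hroots], ?_, fun z hz => ?_⟩
  · rw [hroots]
    refine (Multiset.nodup_range d).map_on fun i hi j hj hij => (hr.strictMonoOn h).injOn
      (Multiset.mem_range.mp hi) (Multiset.mem_range.mp hj) ?_
    exact mul_left_cancel₀ (pow_pos hγ _).ne' (Complex.ofReal_injective hij)
  · rw [hroots] at hz
    obtain ⟨i, hi, rfl⟩ := Multiset.mem_map.mp hz
    exact ⟨Complex.ofReal_im _,
      mul_neg_of_pos_of_neg (pow_pos hγ _) (hr.neg i (Multiset.mem_range.mp hi))⟩

/-- All roots of the local polynomial of the antiferromagnetic two-spin edge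
model are distinct, real, and strictly negative. -/
theorem stmt7 (β γ : ℝ) (hβ : 0 < β) (hγ : 0 < γ) (h : β * γ < 1)
    (d : ℕ) (hd : 2 ≤ d) (P : Polynomial ℂ)
    (hP : P = ∑ k ∈ Finset.range (d + 1),
      Polynomial.C
        (((d.choose k : ℝ) * β ^ (k.choose 2) * γ ^ ((d - k).choose 2) : ℝ) : ℂ)
        * Polynomial.X ^ k) :
    P.roots.card = d ∧ P.roots.Nodup ∧
      ∀ z ∈ P.roots, z.im = 0 ∧ z.re < 0 :=
  stmt7_general β γ hβ hγ h d P hP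
end

section
/- Fix reals β > 0, γ > 0 with βγ < 1 and a positive integer d ≥ 2. Let P_d(z) = ∑_{k=0}^d C(d,k) β^{C(k,2)} γ^{C(d−k,2)} z^k and suppose its roots are r1 > r2 > ... > rd (all real and negative). Then consecutive roots satisfy r_i / r_{i+1} < βγ for all 1 ≤ i ≤ d−1. -/
/-!
By induction on `n`, the roots of `P_n := edgeLocalPoly β γ n` are `ρ₀ > ρ₁ > ⋯ > ρ_{n-1}`, all
negative, with `β γ ρ_{i+1} < ρ_i`. The step rests on the recurrence
`P_{n+1}(z) = γⁿ P_n(z / γ) + z P_n(β z)`: at `z = γ ρ_j` only the second term survives and at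
`z = ρ_j / β` only the first, and by the separation hypothesis both have sign `(-1)^(j+1)`. Hence
`P_{n+1}` alternates in sign along `0 > γρ₀ > ρ₀/β > γρ₁ > ⋯ > ρ_{n-1}/β > -∞`, producing `n + 1`
roots `σ_j ∈ (γ ρ_j, ρ_{j-1} / β)`, and `β γ σ_{j+1} < γ ρ_j < σ_j` is the separation for `n + 1`.
Chaining the separation, `z / w < β γ` holds for any two roots `w < z`, not only consecutive ones.
-/

open Polynomial Finset Filter

lemma neg_one_pow_mul_prod_sub_pos_s8 {ρ : ℕ → ℝ} {t : ℝ} {k n : ℕ} (hk : k ≤ n)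
    (hlt : ∀ i < k, t < ρ i) (hgt : ∀ i, k ≤ i → i < n → ρ i < t) :
    0 < (-1) ^ k * ∏ j ∈ range n, (t - ρ j) := by
  have hflip : (-1) ^ k * ∏ j ∈ range k, (t - ρ j) = ∏ j ∈ range k, (ρ j - t) := by
    simpa using (prod_neg (s := range k) fun j => t - ρ j).symm
  rw [← prod_range_mul_prod_Ico _ hk, ← mul_assoc, hflip]
  exact mul_pos (prod_pos fun i hi => sub_pos.2 (hlt i (mem_range.1 hi)))
    (prod_pos fun i hi => sub_pos.2 (hgt i (mem_Ico.1 hi).1 (mem_Ico.1 hi).2))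

lemma exists_isRoot_of_alternating {p : ℝ[X]} {a b : ℕ → ℝ} {m : ℕ} (hba : ∀ j < m, b j < a j)
    (ha : ∀ j < m, 0 < (-1) ^ j * p.eval (a j))
    (hb : ∀ j < m, 0 < (-1) ^ (j + 1) * p.eval (b j)) :
    ∃ σ : ℕ → ℝ, ∀ j < m, σ j ∈ Set.Ioo (b j) (a j) ∧ p.IsRoot (σ j) := by
  have (j : ℕ) : ∃ t, j < m → t ∈ Set.Ioo (b j) (a j) ∧ p.IsRoot t := by
    by_cases hj : j < m
    · have hcont : ContinuousOn (fun t => (-1) ^ j * p.eval t) (Set.Icc (b j) (a j)) :=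
        (continuous_const.mul p.continuous).continuousOn
      have hbj : (-1) ^ j * p.eval (b j) < 0 := by
        have := hb j hj
        rw [pow_succ] at this
        linarith
      obtain ⟨t, ht, hzero⟩ := intermediate_value_Ioo (hba j hj).le hcont ⟨hbj, ha j hj⟩
      exact ⟨t, fun _ => ⟨ht, by simpa using hzero⟩⟩
    · exact ⟨0, fun h => absurd h hj⟩
  choose σ hσ using this
  exact ⟨σ, hσ⟩

lemma eq_C_leadingCoeff_mul_prod_X_sub_C {R : Type*} [CommRing R] [IsDomain R] {p : R[X]} {n : ℕ}
    {v : ℕ → R} (hdeg : p.natDegree = n) (hv : Set.InjOn v (range n))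
    (hroot : ∀ j < n, p.IsRoot (v j)) :
    p = C p.leadingCoeff * ∏ j ∈ range n, (X - C (v j)) := by
  rcases eq_or_ne p 0 with rfl | hp
  · simp
  have hmonic : (∏ j ∈ range n, (X - C (v j))).Monic :=
    monic_prod_of_monic _ _ fun j _ => monic_X_sub_C (v j)
  refine eq_of_degree_le_of_eval_index_eq (range n) hv ?_ ?_ ?_ ?_
  · simpa [hdeg] using degree_le_natDegree (p := p)
  · simp [hp, degree_prod, degree_eq_natDegree hp, hdeg]
  · simp [hmonic.leadingCoeff]
  · intro j hj
    simp [(hroot j (mem_range.1 hj)).eq_zero, eval_prod, prod_eq_zero hj]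

lemma eventually_atBot_neg_one_pow_mul_eval_pos {p : ℝ[X]} (hdeg : 0 < p.natDegree)
    (hlc : 0 < p.leadingCoeff) : ∀ᶠ t in atBot, 0 < (-1) ^ p.natDegree * p.eval t := by
  have hlead : Tendsto (fun t : ℝ => (-1) ^ p.natDegree * (p.leadingCoeff * t ^ p.natDegree))
      atBot atTop := by
    have : Tendsto (fun t : ℝ => (-t) ^ p.natDegree) atBot atTop :=
      (tendsto_pow_atTop hdeg.ne').comp tendsto_neg_atBot_atTop
    convert this.const_mul_atTop hlc using 2 with t
    rw [neg_pow]; ring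
  have hequiv := (Asymptotics.IsEquivalent.refl (u := fun _ : ℝ => (-1 : ℝ) ^ p.natDegree)).mul
    p.isEquivalent_atBot_lead
  exact (hequiv.symm.tendsto_atTop hlead).eventually_gt_atTop 0

lemma strictAntiOn_of_mul_lt {c : ℝ} (hc : c < 1) {ρ : ℕ → ℝ} {n : ℕ} (hneg : ∀ i < n, ρ i < 0)
    (hsep : ∀ i, i + 1 < n → c * ρ (i + 1) < ρ i) : StrictAntiOn ρ (Set.Iio n) := by
  have step (i : ℕ) (hi : i + 1 < n) : ρ (i + 1) < ρ i := by
    nlinarith [hsep i hi, hneg (i + 1) hi]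
  intro i _ j hj hij
  induction j, hij using Nat.le_induction with
  | base => exact step i hj
  | succ j _ ih => exact (step j hj).trans (ih (by simp only [Set.mem_Iio] at hj ⊢; omega))

noncomputable def edgeLocalPoly (β γ : ℝ) (n : ℕ) : ℝ[X] :=
  ∑ k ∈ range (n + 1), C ((n.choose k : ℝ) * β ^ k.choose 2 * γ ^ (n - k).choose 2) * X ^ k

namespace edgeLocalPoly

variable {β γ : ℝ}

lemma eval_eq (n : ℕ) (z : ℝ) : (edgeLocalPoly β γ n).eval z =
    ∑ k ∈ range (n + 1), (n.choose k : ℝ) * β ^ k.choose 2 * γ ^ (n - k).choose 2 * z ^ k := by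
  simp [edgeLocalPoly, eval_finsetSum]

lemma coeff_of_le {n m : ℕ} (hm : m ≤ n) :
    (edgeLocalPoly β γ n).coeff m = (n.choose m : ℝ) * β ^ m.choose 2 * γ ^ (n - m).choose 2 := by
  simp only [edgeLocalPoly, finsetSum_coeff, coeff_C_mul_X_pow]
  simp [Nat.lt_succ_of_le hm]

lemma natDegree_eq (hβ : β ≠ 0) (n : ℕ) : (edgeLocalPoly β γ n).natDegree = n := by
  refine le_antisymm (natDegree_sum_le_of_forall_le _ _ fun k hk => ?_) ?_
  · exact (natDegree_C_mul_X_pow_le _ _).trans (Nat.lt_succ_iff.1 (mem_range.1 hk))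
  · refine le_natDegree_of_ne_zero ?_
    rw [coeff_of_le le_rfl]
    simp [hβ]

lemma leadingCoeff_eq (hβ : β ≠ 0) (n : ℕ) :
    (edgeLocalPoly β γ n).leadingCoeff = β ^ n.choose 2 := by
  simp [leadingCoeff, natDegree_eq hβ, coeff_of_le]

lemma eval_zero (n : ℕ) : (edgeLocalPoly β γ n).eval 0 = γ ^ n.choose 2 := by
  simp [← coeff_zero_eq_eval_zero, coeff_of_le]

lemma eval_succ (hγ : γ ≠ 0) (n : ℕ) (z : ℝ) : (edgeLocalPoly β γ (n + 1)).eval z =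
    γ ^ n * (edgeLocalPoly β γ n).eval (z / γ) + z * (edgeLocalPoly β γ n).eval (β * z) := by
  have choose_two_succ (m : ℕ) : (m + 1).choose 2 = m.choose 2 + m := by
    simp [Nat.choose_succ_succ', add_comm]
  have hγsum : γ ^ n * (edgeLocalPoly β γ n).eval (z / γ) = ∑ k ∈ range (n + 1),
      (n.choose (k + 1) : ℝ) * β ^ (k + 1).choose 2 * γ ^ (n - k).choose 2 * z ^ (k + 1) +
      γ ^ (n + 1).choose 2 := by
    rw [sum_range_succ, Nat.choose_succ_self, Nat.cast_zero, zero_mul, zero_mul, zero_mul, add_zero,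
      eval_eq, sum_range_succ', mul_add, mul_sum]
    congr 1
    · refine sum_congr rfl fun k hk => ?_
      obtain ⟨m, rfl⟩ : ∃ m, n = k + 1 + m := ⟨n - (k + 1), by grind⟩
      rw [show k + 1 + m - k = m + 1 by omega, Nat.add_sub_cancel_left, choose_two_succ, pow_add,
        div_pow]
      field_simp
      rw [choose_two_succ, pow_add]
      ring
    · simp [choose_two_succ, pow_add, mul_comm]
  have hβsum : z * (edgeLocalPoly β γ n).eval (β * z) = ∑ k ∈ range (n + 1),
      (n.choose k : ℝ) * β ^ (k + 1).choose 2 * γ ^ (n - k).choose 2 * z ^ (k + 1) := by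
    rw [eval_eq, mul_sum]
    refine sum_congr rfl fun k _ => ?_
    rw [choose_two_succ]
    ring
  rw [eval_eq, sum_range_succ']
  simp only [Nat.choose_succ_succ' n, Nat.cast_add, add_mul, sum_add_distrib, Nat.add_sub_add_right]
  rw [hγsum, hβsum]
  simp only [Nat.choose_zero_right, Nat.cast_one, Nat.choose_zero_succ, pow_zero, mul_one,
    tsub_zero, one_mul]
  ring

structure SeparatedRoots (β γ : ℝ) (n : ℕ) (ρ : ℕ → ℝ) : Prop where
  neg : ∀ i < n, ρ i < 0
  sep : ∀ i, i + 1 < n → β * γ * ρ (i + 1) < ρ i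
  eq_prod : edgeLocalPoly β γ n = C (β ^ n.choose 2) * ∏ j ∈ range n, (X - C (ρ j))

namespace SeparatedRoots

variable {n : ℕ} {ρ : ℕ → ℝ}

lemma eval_eq (hρ : SeparatedRoots β γ n ρ) (t : ℝ) :
    (edgeLocalPoly β γ n).eval t = β ^ n.choose 2 * ∏ j ∈ range n, (t - ρ j) := by
  simp [hρ.eq_prod, eval_prod]

lemma isRoot (hρ : SeparatedRoots β γ n ρ) {j : ℕ} (hj : j < n) :
    (edgeLocalPoly β γ n).IsRoot (ρ j) := by
  simp [IsRoot, hρ.eval_eq, prod_eq_zero (mem_range.2 hj)]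

lemma exists_eq_of_isRoot (hρ : SeparatedRoots β γ n ρ) (hβ : β ≠ 0) {z : ℝ}
    (hz : (edgeLocalPoly β γ n).IsRoot z) : ∃ a < n, ρ a = z := by
  rw [IsRoot, hρ.eval_eq] at hz
  obtain ⟨a, ha, hza⟩ := prod_eq_zero_iff.1 ((mul_eq_zero.1 hz).resolve_left (by positivity))
  exact ⟨a, mem_range.1 ha, (sub_eq_zero.1 hza).symm⟩

lemma strictAntiOn (hρ : SeparatedRoots β γ n ρ) (h : β * γ < 1) : StrictAntiOn ρ (Set.Iio n) :=
  strictAntiOn_of_mul_lt h hρ.neg hρ.sep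

lemma mul_lt_of_lt (hρ : SeparatedRoots β γ n ρ) (hβγ : 0 < β * γ) (h : β * γ < 1) {i j : ℕ}
    (hij : i < j) (hj : j < n) : β * γ * ρ j < ρ i := by
  have hle : ρ j ≤ ρ (i + 1) := (hρ.strictAntiOn h).antitoneOn (by simp; omega) (by simpa) hij
  exact (mul_le_mul_of_nonneg_left hle hβγ.le).trans_lt (hρ.sep i (by omega))

section Interlacing

variable (hρ : SeparatedRoots β γ n ρ) (hβ : 0 < β) (hγ : 0 < γ) (h : β * γ < 1)
include hρ hβ hγ h

lemma neg_one_pow_mul_eval_succ_gamma_mul_pos {j : ℕ} (hj : j < n) :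
    0 < (-1) ^ (j + 1) * (edgeLocalPoly β γ (n + 1)).eval (γ * ρ j) := by
  have hβγ : 0 < β * γ := mul_pos hβ hγ
  have hρj : ρ j < 0 := hρ.neg j hj
  have hprod : 0 < (-1) ^ j * ∏ i ∈ range n, (β * γ * ρ j - ρ i) :=
    neg_one_pow_mul_prod_sub_pos_s8 hj.le (fun i hi => hρ.mul_lt_of_lt hβγ h hi hj)
      fun i hji hi => ((hρ.strictAntiOn h).antitoneOn hj hi hji).trans_lt (by nlinarith)
  rw [eval_succ hγ.ne', mul_div_cancel_left₀ _ hγ.ne', (hρ.isRoot hj).eq_zero, hρ.eval_eq,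
    ← mul_assoc β]
  have hpos : 0 < -(γ * ρ j) := by nlinarith
  calc (0 : ℝ)
      < -(γ * ρ j) * β ^ n.choose 2 * ((-1) ^ j * ∏ i ∈ range n, (β * γ * ρ j - ρ i)) := by
        positivity
    _ = _ := by ring

lemma neg_one_pow_mul_eval_succ_div_beta_pos {j : ℕ} (hj : j < n) :
    0 < (-1) ^ (j + 1) * (edgeLocalPoly β γ (n + 1)).eval (ρ j / β) := by
  have hβγ : 0 < β * γ := mul_pos hβ hγ
  have hρj : ρ j < 0 := hρ.neg j hj
  have hlt : ρ j / (β * γ) < ρ j := by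
    rw [div_lt_iff₀ hβγ]; nlinarith
  have hprod : 0 < (-1) ^ (j + 1) * ∏ i ∈ range n, (ρ j / (β * γ) - ρ i) := by
    refine neg_one_pow_mul_prod_sub_pos_s8 hj (fun i hi => ?_) fun i hji hi => ?_
    · exact hlt.trans_le ((hρ.strictAntiOn h).antitoneOn (by simp; omega) hj (by omega))
    · rw [lt_div_iff₀ hβγ, mul_comm]
      exact hρ.mul_lt_of_lt hβγ h hji hi
  rw [eval_succ hγ.ne', mul_div_cancel₀ _ hβ.ne', (hρ.isRoot hj).eq_zero, hρ.eval_eq, div_div]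
  calc (0 : ℝ)
      < γ ^ n * β ^ n.choose 2 * ((-1) ^ (j + 1) * ∏ i ∈ range n, (ρ j / (β * γ) - ρ i)) := by
        positivity
    _ = _ := by ring

lemma exists_isRoot_succ_interlacing : ∃ σ : ℕ → ℝ, ∀ j < n + 1,
    (edgeLocalPoly β γ (n + 1)).IsRoot (σ j) ∧ σ j < (if j = 0 then 0 else ρ (j - 1) / β) ∧
      (j < n → γ * ρ j < σ j) := by
  set p := edgeLocalPoly β γ (n + 1)
  set a : ℕ → ℝ := fun j => if j = 0 then 0 else ρ (j - 1) / β
  obtain ⟨T, hT, hTa⟩ : ∃ T, 0 < (-1) ^ (n + 1) * p.eval T ∧ T < a n := by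
    have hev := eventually_atBot_neg_one_pow_mul_eval_pos (p := p)
      (by rw [natDegree_eq hβ.ne']; omega) (by rw [leadingCoeff_eq hβ.ne']; positivity)
    rw [natDegree_eq hβ.ne'] at hev
    exact (hev.and (eventually_lt_atBot _)).exists
  set b : ℕ → ℝ := fun j => if j < n then γ * ρ j else T
  have hba : ∀ j < n + 1, b j < a j := by
    intro j hj
    rcases Nat.lt_or_ge j n with hjn | hjn
    · have hbj : b j = γ * ρ j := if_pos hjn
      rcases j with _ | i
      · simp only [hbj, ↓reduceIte, a]
        nlinarith [hρ.neg 0 hjn]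
      · simp only [hbj, a, if_neg i.succ_ne_zero, Nat.add_sub_cancel, lt_div_iff₀ hβ]
        nlinarith [hρ.sep i hjn]
    · obtain rfl : j = n := by omega
      simpa [b] using hTa
  have ha : ∀ j < n + 1, 0 < (-1) ^ j * p.eval (a j) := by
    rintro (_ | i) hi
    · simp only [pow_zero, ↓reduceIte, edgeLocalPoly.eval_zero, one_mul, a, p]
      positivity
    · simpa [a] using hρ.neg_one_pow_mul_eval_succ_div_beta_pos hβ hγ h (by omega : i < n)
  have hb : ∀ j < n + 1, 0 < (-1) ^ (j + 1) * p.eval (b j) := by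
    intro j hj
    rcases Nat.lt_or_ge j n with hjn | hjn
    · simpa [b, hjn] using hρ.neg_one_pow_mul_eval_succ_gamma_mul_pos hβ hγ h hjn
    · obtain rfl : j = n := by omega
      simpa [b] using hT
  obtain ⟨σ, hσ⟩ := exists_isRoot_of_alternating hba ha hb
  exact ⟨σ, fun j hj => ⟨(hσ j hj).2, (hσ j hj).1.2, fun hjn => by
    simpa [b, hjn] using (hσ j hj).1.1⟩⟩

theorem exists_succ : ∃ σ, SeparatedRoots β γ (n + 1) σ := by
  obtain ⟨σ, hσ⟩ := hρ.exists_isRoot_succ_interlacing hβ hγ h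
  have hneg : ∀ j < n + 1, σ j < 0 := by
    intro j hj
    refine (hσ j hj).2.1.trans_le ?_
    split_ifs with hj0
    · exact le_rfl
    · exact div_nonpos_of_nonpos_of_nonneg (hρ.neg (j - 1) (by omega)).le hβ.le
  have hsep : ∀ j, j + 1 < n + 1 → β * γ * σ (j + 1) < σ j := by
    intro j hj
    have h1 : σ (j + 1) < ρ j / β := by simpa using (hσ (j + 1) hj).2.1
    calc β * γ * σ (j + 1) < β * γ * (ρ j / β) := mul_lt_mul_of_pos_left h1 (mul_pos hβ hγ)
      _ = γ * ρ j := by field_simp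
      _ < σ j := (hσ j (by omega)).2.2 (by omega)
  refine ⟨σ, hneg, hsep, ?_⟩
  rw [← leadingCoeff_eq hβ.ne' (γ := γ)]
  exact eq_C_leadingCoeff_mul_prod_X_sub_C (natDegree_eq hβ.ne' _)
    (by simpa using (strictAntiOn_of_mul_lt h hneg hsep).injOn) fun j hj => (hσ j hj).1

end Interlacing

end SeparatedRoots

theorem exists_separatedRoots (hβ : 0 < β) (hγ : 0 < γ) (h : β * γ < 1) :
    ∀ n, ∃ ρ, SeparatedRoots β γ n ρ
  | 0 => ⟨0, ⟨by simp, by simp, by simp [edgeLocalPoly]⟩⟩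
  | n + 1 =>
    have ⟨_, hρ⟩ := exists_separatedRoots hβ hγ h n
    hρ.exists_succ hβ hγ h

theorem div_lt_of_isRoot (hβ : 0 < β) (hγ : 0 < γ) (h : β * γ < 1) {n : ℕ} {z w : ℝ}
    (hz : (edgeLocalPoly β γ n).IsRoot z) (hw : (edgeLocalPoly β γ n).IsRoot w) (hwz : w < z) :
    z / w < β * γ := by
  obtain ⟨ρ, hρ⟩ := exists_separatedRoots hβ hγ h n
  obtain ⟨a, ha, rfl⟩ := hρ.exists_eq_of_isRoot hβ.ne' hz
  obtain ⟨b, hb, rfl⟩ := hρ.exists_eq_of_isRoot hβ.ne' hw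
  have hab : a < b := by
    by_contra! hba
    exact hwz.not_ge ((hρ.strictAntiOn h).antitoneOn hb ha hba)
  rw [div_lt_iff_of_neg (hρ.neg b hb)]
  exact hρ.mul_lt_of_lt (mul_pos hβ hγ) h hab hb

end edgeLocalPoly

theorem stmt8_general (β γ : ℝ) (hβ : 0 < β) (hγ : 0 < γ) (h : β * γ < 1)
    (d : ℕ) (r : Fin d → ℝ)
    (hanti : StrictAnti r)
    (hroot : ∀ i, ∑ k ∈ Finset.range (d + 1),
        (d.choose k : ℝ) * β ^ (k.choose 2) * γ ^ ((d - k).choose 2) * r i ^ k = 0) :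
    ∀ i j : Fin d, (j : ℕ) = (i : ℕ) + 1 → r i / r j < β * γ := by
  intro i j hij
  have hroot' (k : Fin d) : (edgeLocalPoly β γ d).IsRoot (r k) := by
    rw [IsRoot, edgeLocalPoly.eval_eq, hroot k]
  exact edgeLocalPoly.div_lt_of_isRoot hβ hγ h (hroot' i) (hroot' j)
    (hanti (Fin.lt_def.2 (by omega)))

/-- The strictly decreasing negative real roots of the local polynomial of the
antiferromagnetic two-spin edge model satisfy `r i / r (i+1) < βγ`. -/
theorem stmt8 (β γ : ℝ) (hβ : 0 < β) (hγ : 0 < γ) (h : β * γ < 1)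
    (d : ℕ) (hd : 2 ≤ d) (r : Fin d → ℝ)
    (hanti : StrictAnti r) (hneg : ∀ i, r i < 0)
    (hroot : ∀ i, ∑ k ∈ Finset.range (d + 1),
        (d.choose k : ℝ) * β ^ (k.choose 2) * γ ^ ((d - k).choose 2) * r i ^ k = 0) :
    ∀ i j : Fin d, (j : ℕ) = (i : ℕ) + 1 → r i / r j < β * γ :=
  stmt8_general β γ hβ hγ h d r hanti hroot
end

section
/- Fix ρ with 0 < ρ < 1 and a positive integer d. The polynomial P(z) = ((1+ρ)/2)(1+z)^d + ((1−ρ)/2)(1−z)^d has all roots of the form (ω − t)/(ω + t) where ω ranges over complex numbers with ω^d = −1 and t = ((1+ρ)/(1−ρ))^{1/d} > 1. In particular, P has no roots in the complement of the closed disk of center −(t²+1)/(t²−1) and radius 2t/(t²−1). -/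
/-!
Writing `a = (1+ρ)/2`, `b = (1-ρ)/2`, so that `b tᵈ = a`, a root `z` of `a(1+z)ᵈ + b(1-z)ᵈ` is
not `1`, and `ω = t(1+z)/(1-z)` satisfies `ωᵈ = -1` and `z = (ω-t)/(ω+t)`. Such an `ω` lies on the
unit circle, and the Möbius map `ω ↦ (ω-t)/(ω+t)` sends the unit circle onto the circle with the
stated center and radius, because `|tω + 1| = |ω + t|` whenever `|ω| = 1`.
-/

section Field

variable {K : Type*} [Field K] [NeZero (2 : K)]

theorem eq_sub_div_add_of_one_sub_ne_zero {t z : K} (ht : t ≠ 0) (hz : 1 - z ≠ 0) :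
    z = (t * (1 + z) / (1 - z) - t) / (t * (1 + z) / (1 - z) + t) := by
  have hsub : t * (1 + z) / (1 - z) - t = 2 * t * z / (1 - z) := by field_simp; ring
  have hadd : t * (1 + z) / (1 - z) + t = 2 * t / (1 - z) := by field_simp; ring
  rw [hsub, hadd, div_div_div_cancel_right₀ hz,
    mul_div_cancel_left₀ z (mul_ne_zero two_ne_zero ht)]

theorem exists_pow_eq_neg_one_of_add_pow_root {a b t z : K} {d : ℕ} (hd : d ≠ 0)
    (ht : t ≠ 0) (hta : b * t ^ d = a) (ha : a ≠ 0)
    (hz : a * (1 + z) ^ d + b * (1 - z) ^ d = 0) :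
    ∃ ω : K, ω ^ d = -1 ∧ z = (ω - t) / (ω + t) := by
  have hb : b ≠ 0 := by rintro rfl; simp [← hta] at ha
  have hz1 : 1 - z ≠ 0 := by
    intro h
    obtain rfl : z = 1 := by linear_combination -h
    simp [zero_pow hd, ha, one_add_one_eq_two, two_ne_zero] at hz
  refine ⟨t * (1 + z) / (1 - z), ?_, eq_sub_div_add_of_one_sub_ne_zero ht hz1⟩
  rw [div_pow, mul_pow, div_eq_iff (pow_ne_zero d hz1)]
  refine mul_left_cancel₀ hb ?_
  linear_combination hz + (1 + z) ^ d * hta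

end Field

theorem norm_eq_one_of_pow_eq_neg_one {ω : ℂ} {d : ℕ} (hd : d ≠ 0) (hω : ω ^ d = -1) :
    ‖ω‖ = 1 :=
  (pow_eq_one_iff_of_nonneg (norm_nonneg ω) hd).mp (by rw [← norm_pow, hω, norm_neg, norm_one])

theorem norm_ofReal_mul_add_one {ω : ℂ} (hω : ‖ω‖ = 1) (t : ℝ) :
    ‖(t : ℂ) * ω + 1‖ = ‖ω + t‖ := by
  have h : ω.re ^ 2 + ω.im ^ 2 = 1 := by
    have := Complex.sq_norm ω
    rw [hω, Complex.normSq_apply] at this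
    linear_combination -this
  rw [← sq_eq_sq₀ (norm_nonneg _) (norm_nonneg _), Complex.sq_norm, Complex.sq_norm,
    Complex.normSq_apply, Complex.normSq_apply]
  simp only [Complex.add_re, Complex.add_im, Complex.mul_re, Complex.mul_im, Complex.ofReal_re,
    Complex.ofReal_im, Complex.one_re, Complex.one_im]
  linear_combination (t ^ 2 - 1) * h

theorem dist_sub_div_add_eq_of_norm_eq_one {ω : ℂ} (hω : ‖ω‖ = 1) {t : ℝ} (ht : 1 < t) :
    dist ((ω - t) / (ω + t)) ((-((t ^ 2 + 1) / (t ^ 2 - 1)) : ℝ) : ℂ) = 2 * t / (t ^ 2 - 1) := by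
  have ht2 : 0 < t ^ 2 - 1 := by nlinarith
  have hωt : ω + t ≠ 0 := by
    intro h
    have : ‖ω‖ = t := by
      simpa [abs_of_pos (by linarith : 0 < t)] using congrArg norm (eq_neg_of_add_eq_zero_left h)
    linarith
  have hform : (ω - t) / (ω + t) - ((-((t ^ 2 + 1) / (t ^ 2 - 1)) : ℝ) : ℂ)
      = ((2 * t / (t ^ 2 - 1) : ℝ) : ℂ) * (((t : ℂ) * ω + 1) / (ω + t)) := by
    have : ((t ^ 2 - 1 : ℝ) : ℂ) ≠ 0 := Complex.ofReal_ne_zero.mpr ht2.ne'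
    push_cast at this ⊢
    field_simp
    ring
  rw [Complex.dist_eq, hform, norm_mul, norm_div, norm_ofReal_mul_add_one hω,
    div_self (norm_ne_zero_iff.mpr hωt), mul_one, Complex.norm_real, Real.norm_of_nonneg]
  positivity

/-- The local polynomial of the weighted even subgraphs model has all roots of
the form `(ω - t)/(ω + t)` with `ω^d = -1`, where `t = ((1+ρ)/(1-ρ))^{1/d} > 1`;
in particular it has no roots outside the closed disk of center
`-(t²+1)/(t²-1)` and radius `2t/(t²-1)`. -/
theorem stmt11 (ρ : ℝ) (h0 : 0 < ρ) (h1 : ρ < 1) (d : ℕ) (hd : 1 ≤ d)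
    (t : ℝ) (ht : t = ((1 + ρ) / (1 - ρ)) ^ ((1 : ℝ) / d)) :
    1 < t ∧
    (∀ z : ℂ,
      (((1 + ρ) / 2 : ℝ) : ℂ) * (1 + z) ^ d + (((1 - ρ) / 2 : ℝ) : ℂ) * (1 - z) ^ d = 0 →
      ∃ ω : ℂ, ω ^ d = -1 ∧ z = (ω - (t : ℂ)) / (ω + (t : ℂ))) ∧
    (∀ z : ℂ,
      z ∉ Metric.closedBall ((-((t ^ 2 + 1) / (t ^ 2 - 1)) : ℝ) : ℂ)
            (2 * t / (t ^ 2 - 1)) →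
      (((1 + ρ) / 2 : ℝ) : ℂ) * (1 + z) ^ d + (((1 - ρ) / 2 : ℝ) : ℂ) * (1 - z) ^ d ≠ 0) := by
  have hd0 : d ≠ 0 := by omega
  have hbase : 1 < (1 + ρ) / (1 - ρ) := by rw [lt_div_iff₀ (by linarith)]; linarith
  have ht1 : 1 < t := ht ▸ Real.one_lt_rpow hbase (by positivity)
  have htd : t ^ d = (1 + ρ) / (1 - ρ) := by
    rw [ht, one_div, Real.rpow_inv_natCast_pow (by linarith) hd0]
  have hcoeff : (((1 - ρ) / 2 : ℝ) : ℂ) * (t : ℂ) ^ d = (((1 + ρ) / 2 : ℝ) : ℂ) := by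
    rw [← Complex.ofReal_pow, ← Complex.ofReal_mul, htd]
    congr 1
    field_simp [(by linarith : 1 - ρ ≠ 0)]
  have roots : ∀ z : ℂ,
      (((1 + ρ) / 2 : ℝ) : ℂ) * (1 + z) ^ d + (((1 - ρ) / 2 : ℝ) : ℂ) * (1 - z) ^ d = 0 →
      ∃ ω : ℂ, ω ^ d = -1 ∧ z = (ω - (t : ℂ)) / (ω + (t : ℂ)) :=
    fun z hz ↦ exists_pow_eq_neg_one_of_add_pow_root hd0
      (Complex.ofReal_ne_zero.mpr (by linarith)) hcoeff
      (Complex.ofReal_ne_zero.mpr (by linarith)) hz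
  refine ⟨ht1, roots, fun z hz hP ↦ hz ?_⟩
  obtain ⟨ω, hω, rfl⟩ := roots z hP
  exact Metric.mem_closedBall.mpr
    (dist_sub_div_add_eq_of_norm_eq_one (norm_eq_one_of_pow_eq_neg_one hd0 hω) ht1).le
end

section
/- Let Γ ⊆ ℂ be a non-empty open region with 1 ∈ Γ and let p ∈ (0,1]. Define B = {z/(p(z−1)) : z ∈ Γ, z ≠ 1}. If 0 ∈ closure(Γ), then dist(1, B) ≤ 1. Moreover if α = inf(Γ ∩ ℝ₊) and β = sup(Γ ∩ ℝ₊), then dist(1, B) ≤ min{ α/(p(1−α)) + 1 , 1/(p(β−1)) + (1−p)/p } (with the convention 1/∞ = 0). -/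
/-!
The distance from `1` to `B` is also the distance to its closure, and the closure contains every
limit of `f z = z / (p (z - 1))` along `Γ \ {1}`. The bounds are `|1 - w|` for three such limits:
`f 0` when `0 ∈ closure Γ`, `f α` and `f β` (both are real points of `closure Γ` other than `1`,
since the open set `Γ` contains an interval around `1`), and `1 / p = lim_{z → ∞} f z` when
`S`, hence `Γ`, is unbounded.
-/

open scoped Classical

open Filter Topology Metric Bornology

theorem Metric.infDist_le_dist_of_tendsto {ι E : Type*} [PseudoMetricSpace E] {l : Filter ι}
    [l.NeBot] {u : ι → E} {s : Set E} {x y : E} (hs : ∀ᶠ i in l, u i ∈ s)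
    (hu : Tendsto u l (𝓝 y)) : infDist x s ≤ dist x y := by
  rw [← infDist_closure]
  exact infDist_le_dist_of_mem (mem_closure_of_tendsto hu hs)

theorem tendsto_div_mul_sub_one_cobounded {𝕜 : Type*} [NormedField 𝕜] (c : 𝕜) :
    Tendsto (fun z => z / (c * (z - 1))) (cobounded 𝕜) (𝓝 c⁻¹) := by
  have h : Tendsto (fun z : 𝕜 => c⁻¹ * (1 + (z - 1)⁻¹)) (cobounded 𝕜) (𝓝 c⁻¹) := by
    simpa using
      ((tendsto_inv₀_cobounded.comp (tendsto_sub_const_cobounded 1)).const_add 1).const_mul c⁻¹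
  refine h.congr' ((eventually_ne_cobounded 1).mono fun z hz => ?_)
  have : z - 1 ≠ 0 := sub_ne_zero.2 hz
  field_simp
  ring

section

variable {Γ : Set ℂ} {c : ℂ}

theorem infDist_one_le_of_tendsto {l : Filter ℂ} [l.NeBot] {w : ℂ}
    (hl : ∀ᶠ z in l, z ∈ Γ ∧ z ≠ 1) (hw : Tendsto (fun z => z / (c * (z - 1))) l (𝓝 w)) :
    infDist 1 {w | ∃ z ∈ Γ, z ≠ 1 ∧ w = z / (c * (z - 1))} ≤ ‖1 - w‖ := by
  rw [← dist_eq_norm]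
  exact infDist_le_dist_of_tendsto (hl.mono fun z hz => ⟨z, hz.1, hz.2, rfl⟩) hw

theorem infDist_one_le_of_mem_closure (hc : c ≠ 0) {a : ℂ} (ha : a ∈ closure Γ) (ha1 : a ≠ 1) :
    infDist 1 {w | ∃ z ∈ Γ, z ≠ 1 ∧ w = z / (c * (z - 1))} ≤ ‖1 - a / (c * (a - 1))‖ := by
  have := mem_closure_iff_nhdsWithin_neBot.mp ha
  have hcont : ContinuousAt (fun z => z / (c * (z - 1))) a := by
    fun_prop (disch := exact mul_ne_zero hc (sub_ne_zero.2 ha1))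
  exact infDist_one_le_of_tendsto
    (eventually_mem_nhdsWithin.and
      (eventually_nhdsWithin_of_eventually_nhds (eventually_ne_nhds ha1)))
    (hcont.tendsto.mono_left nhdsWithin_le_nhds)

theorem infDist_one_le_of_not_isBounded (hΓ : ¬IsBounded Γ) :
    infDist 1 {w | ∃ z ∈ Γ, z ≠ 1 ∧ w = z / (c * (z - 1))} ≤ ‖1 - c⁻¹‖ := by
  have hfreq : ∃ᶠ z in cobounded ℂ, z ∈ Γ := fun h => hΓ (isBounded_def.2 h)
  have : (cobounded ℂ ⊓ 𝓟 Γ).NeBot := frequently_iff_neBot.mp hfreq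
  exact infDist_one_le_of_tendsto
    ((eventually_principal.2 fun _ h => h).filter_mono inf_le_right |>.and
      ((eventually_ne_cobounded 1).filter_mono inf_le_left))
    ((tendsto_div_mul_sub_one_cobounded c).mono_left inf_le_left)

end

section

variable {p : ℝ}

theorem norm_one_sub_div_of_lt_one (hp : 0 < p) {a : ℝ} (ha0 : 0 ≤ a) (ha1 : a < 1) :
    ‖1 - (a : ℂ) / (p * (a - 1))‖ = a / (p * (1 - a)) + 1 := by
  have h : 1 - (a : ℂ) / (p * (a - 1)) = ((a / (p * (1 - a)) + 1 : ℝ) : ℂ) := by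
    have : (a : ℂ) - 1 ≠ 0 := by exact_mod_cast (sub_neg.2 ha1).ne
    have : (1 : ℂ) - a ≠ 0 := by exact_mod_cast (sub_pos.2 ha1).ne'
    have : (p : ℂ) ≠ 0 := by exact_mod_cast hp.ne'
    push_cast
    field_simp
    ring
  have : 0 ≤ 1 - a := by linarith
  rw [h, Complex.norm_real, Real.norm_of_nonneg (by positivity)]

theorem norm_one_sub_div_of_one_lt (hp0 : 0 < p) (hp1 : p ≤ 1) {a : ℝ} (ha : 1 < a) :
    ‖1 - (a : ℂ) / (p * (a - 1))‖ = 1 / (p * (a - 1)) + (1 - p) / p := by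
  have h : 1 - (a : ℂ) / (p * (a - 1)) = -((1 / (p * (a - 1)) + (1 - p) / p : ℝ) : ℂ) := by
    have : (a : ℂ) - 1 ≠ 0 := by exact_mod_cast (sub_pos.2 ha).ne'
    have : (p : ℂ) ≠ 0 := by exact_mod_cast hp0.ne'
    push_cast
    field_simp
    ring
  have : 0 < a - 1 := by linarith
  have : 0 ≤ 1 - p := by linarith
  rw [h, norm_neg, Complex.norm_real, Real.norm_of_nonneg (by positivity)]

theorem norm_one_sub_inv_ofReal (hp0 : 0 < p) (hp1 : p ≤ 1) :
    ‖1 - (p : ℂ)⁻¹‖ = (1 - p) / p := by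
  have h : 1 - (p : ℂ)⁻¹ = -(((1 - p) / p : ℝ) : ℂ) := by
    have : (p : ℂ) ≠ 0 := by exact_mod_cast hp0.ne'
    push_cast
    field_simp
    ring
  have : 0 ≤ 1 - p := by linarith
  rw [h, norm_neg, Complex.norm_real, Real.norm_of_nonneg (by positivity)]

end

theorem stmt15_general (Γ : Set ℂ) (hopen : IsOpen Γ)
    (h1 : (1 : ℂ) ∈ Γ) (p : ℝ) (hp0 : 0 < p) (hp1 : p ≤ 1)
    (B : Set ℂ)
    (hB : B = {w : ℂ | ∃ z ∈ Γ, z ≠ 1 ∧ w = z / ((p : ℂ) * (z - 1))})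
    (S : Set ℝ) (hS : S = {x : ℝ | 0 < x ∧ (x : ℂ) ∈ Γ}) :
    ((0 : ℂ) ∈ closure Γ → Metric.infDist 1 B ≤ 1) ∧
    Metric.infDist 1 B ≤
      min (sInf S / (p * (1 - sInf S)) + 1)
          (if BddAbove S then 1 / (p * (sSup S - 1)) + (1 - p) / p
           else (1 - p) / p) := by
  subst hB
  have hp : (p : ℂ) ≠ 0 := by exact_mod_cast hp0.ne'
  have hSΓ : ∀ x ∈ S, (x : ℂ) ∈ Γ := fun x hx => (hS ▸ hx).2
  have hS1 : S ∈ 𝓝 (1 : ℝ) := hS ▸ inter_mem (Ioi_mem_nhds one_pos)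
    (Complex.continuous_ofReal.continuousAt.preimage_mem_nhds (hopen.mem_nhds (by simpa using h1)))
  have hSbdd : BddBelow S := ⟨0, fun x hx => (hS ▸ hx).1.le⟩
  have hSne : S.Nonempty := ⟨1, mem_of_mem_nhds hS1⟩
  obtain ⟨x₀, hx₀1, hx₀⟩ := ((frequently_lt_nhds (1 : ℝ)).and_eventually hS1).exists
  have hα0 : 0 ≤ sInf S := le_csInf hSne fun x hx => (hS ▸ hx).1.le
  have hα1 : sInf S < 1 := csInf_lt_of_lt hSbdd hx₀ hx₀1
  refine ⟨fun h0 => by simpa using infDist_one_le_of_mem_closure hp h0 zero_ne_one, le_min ?_ ?_⟩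
  · rw [← norm_one_sub_div_of_lt_one hp0 hα0 hα1]
    exact infDist_one_le_of_mem_closure hp
      (map_mem_closure Complex.continuous_ofReal (csInf_mem_closure hSne hSbdd) hSΓ)
      (by exact_mod_cast hα1.ne)
  split_ifs with hbdd
  · obtain ⟨x₁, hx₁1, hx₁⟩ := ((frequently_gt_nhds (1 : ℝ)).and_eventually hS1).exists
    have hβ1 : 1 < sSup S := lt_csSup_of_lt hbdd hx₁ hx₁1
    rw [← norm_one_sub_div_of_one_lt hp0 hp1 hβ1]
    exact infDist_one_le_of_mem_closure hp
      (map_mem_closure Complex.continuous_ofReal (csSup_mem_closure hSne hbdd) hSΓ)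
      (by exact_mod_cast hβ1.ne')
  · have hΓ : ¬IsBounded Γ := fun h => hbdd <|
      ((Complex.isometry_ofReal.antilipschitz.isBounded_preimage h).subset hSΓ).bddAbove
    rw [← norm_one_sub_inv_ofReal hp0 hp1]
    exact infDist_one_le_of_not_isBounded hΓ

/-- Bounds on the distance from 1 to the region
`B = {z/(p(z-1)) : z ∈ Γ, z ≠ 1}`. -/
theorem stmt15 (Γ : Set ℂ) (hne : Γ.Nonempty) (hopen : IsOpen Γ)
    (h1 : (1 : ℂ) ∈ Γ) (p : ℝ) (hp0 : 0 < p) (hp1 : p ≤ 1)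
    (B : Set ℂ)
    (hB : B = {w : ℂ | ∃ z ∈ Γ, z ≠ 1 ∧ w = z / ((p : ℂ) * (z - 1))})
    (S : Set ℝ) (hS : S = {x : ℝ | 0 < x ∧ (x : ℂ) ∈ Γ}) :
    ((0 : ℂ) ∈ closure Γ → Metric.infDist 1 B ≤ 1) ∧
    Metric.infDist 1 B ≤
      min (sInf S / (p * (1 - sInf S)) + 1)
          (if BddAbove S then 1 / (p * (sSup S - 1)) + (1 - p) / p
           else (1 - p) / p) :=
  stmt15_general Γ hopen h1 p hp0 hp1 B hB S hS
end

section
/- Let G = (V,E) be a graph with maximum degree at most Δ, fix q ≥ 2, and for each edge uv let A^{uv} ∈ ℂ^{q×q}. Suppose 0 < θ < 2π/3, τ = cos(θ/2), and δ = (θτ/(2Δ))/(1 + θτ/(2Δ)) so that θ = 2δΔ/(τ(1−δ)). If |A^{uv}(j,k) − 1| < δ for all edges uv and all j,k ∈ [q], then for every S ⊆ V and every map φ: S → [q], the partial partition function Z = ∑_{σ: V→[q], σ|_S = φ} ∏_{uv∈E} A^{uv}(σ(u),σ(v)) is nonzero. -/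
/-!
Descending induction on the pinned set `S`, simultaneously for all edge weightings within `δ` of
`1`, with the invariant: `Z ≠ 0`, and recolouring one pinned vertex turns `Z` by an angle at most
`θ`. Recolouring a pinned vertex `u` amounts to changing the at most `Δ` weights at `u`, each into
a function of the colour of its other endpoint `w` alone, so it suffices that one such change
turns `Z` by at most `B = θ / Δ`. If `w` is pinned the changed weight is a constant factor within
`δ` of `1`. If `w` is free, expanding over its colour gives `Z = ∑ j, g j * X j` with
`‖g j - 1‖ ≤ δ`, where the `X j` are nonzero and pairwise within angle `θ` by induction. Since
`θ < 2π/3` they lie in a sector of half-angle `θ / 2`, so `‖∑ X j‖ ≥ cos (θ / 2) * ∑ ‖X j‖`;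
hence `∑ g j * X j` lies within relative distance `δ / cos (θ / 2)` of `∑ X j`, which bounds its
angle to `∑ X j`. The same sector bound, applied to the expansion over a free vertex, gives
`Z ≠ 0`.
-/

open Finset Function InnerProductGeometry Real

lemma abs_sub_le_of_abs_toIocMod_sub_le {a b θ : ℝ} (ha : |a| ≤ θ) (hb : |b| ≤ θ)
    (hθ : θ < 2 * π / 3) (h : |toIocMod two_pi_pos (-π) (a - b)| ≤ θ) : |a - b| ≤ θ := by
  -- `toIocMod` shifts by a multiple of `2π`, here one of size at most `3θ < 2π`
  have hshift := toIocMod_sub_self two_pi_pos (-π) (a - b)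
  set n := toIocDiv two_pi_pos (-π) (a - b)
  rw [zsmul_eq_mul] at hshift
  have hn : n = 0 := by
    have hdist : |((-n : ℤ) : ℝ) * (2 * π)| ≤ 3 * θ := by
      rw [← hshift]
      linarith [abs_sub (toIocMod two_pi_pos (-π) (a - b)) (a - b), abs_sub a b]
    rw [abs_mul, abs_of_pos two_pi_pos, Int.cast_neg, abs_neg] at hdist
    have : |(n : ℝ)| < 1 := by nlinarith [pi_pos]
    exact_mod_cast Int.abs_lt_one_iff.1 (by exact_mod_cast this)
  rw [hn, neg_zero, Int.cast_zero, zero_mul, sub_eq_zero] at hshift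
  rwa [hshift] at h

theorem cos_mul_sum_norm_le_norm_sum {F ι : Type*} [NormedAddCommGroup F] [InnerProductSpace ℝ F]
    (s : Finset ι) (X : ι → F) {u : F} (hu : u ≠ 0) {α : ℝ} (hα : α ≤ π)
    (h : ∀ j ∈ s, angle u (X j) ≤ α) : cos α * ∑ j ∈ s, ‖X j‖ ≤ ‖∑ j ∈ s, X j‖ := by
  have hu' : 0 < ‖u‖ := norm_pos_iff.2 hu
  refine le_of_mul_le_mul_left ?_ hu'
  calc ‖u‖ * (cos α * ∑ j ∈ s, ‖X j‖) = ∑ j ∈ s, cos α * (‖u‖ * ‖X j‖) := by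
        rw [mul_sum, mul_sum]; exact sum_congr rfl fun _ _ => by ring
    _ ≤ ∑ j ∈ s, cos (angle u (X j)) * (‖u‖ * ‖X j‖) := by
        gcongr with j hj
        exact cos_le_cos_of_nonneg_of_le_pi (angle_nonneg _ _) hα (h j hj)
    _ = inner ℝ u (∑ j ∈ s, X j) := by
        simp only [cos_angle_mul_norm_mul_norm, inner_sum]
    _ ≤ ‖u‖ * ‖∑ j ∈ s, X j‖ := real_inner_le_norm _ _

namespace Complex

lemma angle_eq_abs_toIocMod_arg_sub {x y : ℂ} (hx : x ≠ 0) (hy : y ≠ 0) :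
    angle x y = |toIocMod two_pi_pos (-π) (x.arg - y.arg)| := by
  rw [angle_eq_abs_arg hx hy, ← arg_coe_angle_toReal_eq_arg, arg_div_coe_angle hx hy,
    ← Real.Angle.coe_sub, Real.Angle.toReal_coe]

lemma angle_one_le_of_norm_sub_one_le {z : ℂ} {r : ℝ} (hz : ‖z - 1‖ ≤ r) (hr : r < 1) :
    angle z 1 ≤ r / √(1 - r ^ 2) := by
  have hre : |z.re - 1| ≤ r := by simpa using (abs_re_le_norm (z - 1)).trans hz
  have hre0 : 0 < z.re := by linarith [(abs_le.1 hre).1]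
  have hz0 : z ≠ 0 := fun h => by simp [h] at hre0
  have hdisc : (z.re - 1) ^ 2 + z.im ^ 2 ≤ r ^ 2 := by
    have := pow_le_pow_left₀ (norm_nonneg _) hz 2
    rwa [Complex.sq_norm, normSq_apply, sub_re, sub_im, one_re, one_im, sub_zero, ← sq, ← sq]
      at this
  have hr0 : 0 ≤ r := (norm_nonneg _).trans hz
  have hr2 : 0 ≤ 1 - r ^ 2 := by nlinarith
  have hsqrt : 0 < √(1 - r ^ 2) := Real.sqrt_pos.2 (by nlinarith)
  have htan : |z.arg| ≤ |z.im| / z.re := by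
    have h := le_tan (abs_nonneg z.arg) (abs_arg_lt_pi_div_two_iff.2 (Or.inl hre0))
    rcases abs_cases z.arg with ⟨h1, _⟩ | ⟨h1, _⟩ <;> rw [h1] at h ⊢
    · rw [tan_arg] at h
      exact h.trans (div_le_div_of_nonneg_right (le_abs_self _) hre0.le)
    · rw [Real.tan_neg, tan_arg, ← neg_div] at h
      exact h.trans (div_le_div_of_nonneg_right (neg_le_abs _) hre0.le)
  -- the tangents from `0` to the disc `‖z - 1‖ ≤ r` have slope `± r / √(1 - r ^ 2)`
  have hslope : z.im ^ 2 * (1 - r ^ 2) ≤ (r * z.re) ^ 2 := by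
    nlinarith [sq_nonneg (z.re - (1 - r ^ 2)), mul_le_mul_of_nonneg_right hdisc hr2]
  rw [angle_one_right hz0]
  refine htan.trans ?_
  rw [div_le_div_iff₀ hre0 hsqrt, ← Real.sqrt_sq_eq_abs, ← Real.sqrt_mul (sq_nonneg _),
    ← Real.sqrt_sq (mul_nonneg hr0 hre0.le)]
  exact Real.sqrt_le_sqrt hslope

lemma angle_le_of_norm_sub_le {z w : ℂ} {r : ℝ} (hw : w ≠ 0) (h : ‖z - w‖ ≤ r * ‖w‖)
    (hr : r < 1) : angle z w ≤ r / √(1 - r ^ 2) := by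
  have hw' : 0 < ‖w‖ := norm_pos_iff.2 hw
  rw [show angle z w = angle (z / w) 1 by rw [angle_div_left_eq_angle_mul_right, one_mul]]
  refine angle_one_le_of_norm_sub_one_le ?_ hr
  rwa [← div_self hw, ← sub_div, norm_div, div_le_iff₀ hw']

lemma angle_le_of_norm_sub_le_of_norm_sub_le {z z' w : ℂ} {r : ℝ} (hw : w ≠ 0)
    (h : ‖z - w‖ ≤ r * ‖w‖) (h' : ‖z' - w‖ ≤ r * ‖w‖) (hr : r < 1) :
    angle z z' ≤ 2 * (r / √(1 - r ^ 2)) := by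
  have := angle_le_of_norm_sub_le hw h hr
  have := angle_le_of_norm_sub_le hw h' hr
  linarith [angle_le_angle_add_angle z w z', angle_comm w z']

variable {ι : Type*} {X : ι → ℂ} {θ : ℝ}

lemma cos_half_pos_of_pairwise_angle_le [Nonempty ι] (hθ : θ < 2 * π / 3)
    (h : ∀ j k, angle (X j) (X k) ≤ θ) : 0 < Real.cos (θ / 2) := by
  obtain ⟨j⟩ := ‹Nonempty ι›
  have := (angle_nonneg _ _).trans (h j j)
  exact cos_pos_of_mem_Ioo ⟨by linarith [pi_pos], by linarith⟩

variable [Fintype ι]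

lemma exists_angle_le_half_of_pairwise_angle_le (hθ : θ < 2 * π / 3) (hX : ∀ j, X j ≠ 0)
    (h : ∀ j k, angle (X j) (X k) ≤ θ) : ∃ u ≠ 0, ∀ j, angle u (X j) ≤ θ / 2 := by
  cases isEmpty_or_nonempty ι
  · exact ⟨1, one_ne_zero, isEmptyElim⟩
  obtain ⟨j₀⟩ := ‹Nonempty ι›
  set Y := fun j => X j / X j₀
  have hY : ∀ j, Y j ≠ 0 := fun j => div_ne_zero (hX j) (hX j₀)
  have ha : ∀ j, |(Y j).arg| ≤ θ := fun j => by
    rw [← angle_one_right (hY j), angle_div_left_eq_angle_mul_right, one_mul]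
    exact h j j₀
  have hab : ∀ j k, |(Y j).arg - (Y k).arg| ≤ θ := fun j k => by
    refine abs_sub_le_of_abs_toIocMod_sub_le (ha j) (ha k) hθ ?_
    rw [← angle_eq_abs_toIocMod_arg_sub (hY j) (hY k)]
    simpa only [Y, div_eq_mul_inv, angle_mul_right (inv_ne_zero (hX j₀))] using h j k
  obtain ⟨M, -, hM⟩ := univ.exists_max_image (fun j => (Y j).arg) univ_nonempty
  -- all `arg (Y j)` lie in `[arg (Y M) - θ, arg (Y M)]`; aim at the midpoint of that arc
  refine ⟨X j₀ * exp (↑((Y M).arg - θ / 2) * I), mul_ne_zero (hX j₀) (exp_ne_zero _), fun j => ?_⟩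
  rw [show X j = X j₀ * Y j from (mul_div_cancel₀ _ (hX j₀)).symm, angle_mul_left (hX j₀),
    ← norm_mul_exp_arg_mul_I (Y j), ← real_smul (x := ‖Y j‖),
    angle_smul_right_of_pos _ _ (norm_pos_iff.2 (hY j)), angle_exp_exp]
  have h1 := hM j (mem_univ _)
  have h2 := (abs_le.1 (hab M j)).2
  have h3 : 0 ≤ θ := (abs_nonneg _).trans (ha j)
  rw [(toIocMod_eq_self _).2 ⟨by linarith [pi_gt_three], by linarith [pi_gt_three]⟩, abs_le]
  constructor <;> linarith

theorem cos_half_mul_sum_norm_le_norm_sum (hθ : θ < 2 * π / 3) (hX : ∀ j, X j ≠ 0)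
    (h : ∀ j k, angle (X j) (X k) ≤ θ) : Real.cos (θ / 2) * ∑ j, ‖X j‖ ≤ ‖∑ j, X j‖ := by
  obtain ⟨u, hu, hangle⟩ := exists_angle_le_half_of_pairwise_angle_le hθ hX h
  exact cos_mul_sum_norm_le_norm_sum _ _ hu (by linarith [pi_pos]) fun j _ => hangle j

theorem sum_ne_zero_of_pairwise_angle_le [Nonempty ι] (hθ : θ < 2 * π / 3) (hX : ∀ j, X j ≠ 0)
    (h : ∀ j k, angle (X j) (X k) ≤ θ) : ∑ j, X j ≠ 0 := by
  have hsum : 0 < ∑ j, ‖X j‖ := sum_pos (fun j _ => norm_pos_iff.2 (hX j)) univ_nonempty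
  have := cos_half_mul_sum_norm_le_norm_sum hθ hX h
  have := mul_pos (cos_half_pos_of_pairwise_angle_le hθ h) hsum
  exact norm_pos_iff.1 (by linarith)

theorem angle_sum_mul_le [Nonempty ι] {g g' : ι → ℂ} {δ r : ℝ} (hθ : θ < 2 * π / 3)
    (hX : ∀ j, X j ≠ 0) (h : ∀ j k, angle (X j) (X k) ≤ θ) (hg : ∀ j, ‖g j - 1‖ ≤ δ)
    (hg' : ∀ j, ‖g' j - 1‖ ≤ δ) (hδr : δ ≤ r * Real.cos (θ / 2)) (hr : r < 1) :
    angle (∑ j, g j * X j) (∑ j, g' j * X j) ≤ 2 * (r / √(1 - r ^ 2)) := by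
  have hcos := cos_half_pos_of_pairwise_angle_le hθ h
  obtain ⟨j₀⟩ := ‹Nonempty ι›
  have hr0 : 0 ≤ r := nonneg_of_mul_nonneg_left ((norm_nonneg _).trans ((hg j₀).trans hδr)) hcos
  have hT := cos_half_mul_sum_norm_le_norm_sum hθ hX h
  have hnear : ∀ c : ι → ℂ, (∀ j, ‖c j - 1‖ ≤ δ) →
      ‖∑ j, c j * X j - ∑ j, X j‖ ≤ r * ‖∑ j, X j‖ := fun c hc =>
    calc ‖∑ j, c j * X j - ∑ j, X j‖ = ‖∑ j, (c j - 1) * X j‖ := by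
          simp only [← sum_sub_distrib, sub_one_mul]
      _ ≤ ∑ j, δ * ‖X j‖ := (norm_sum_le _ _).trans (sum_le_sum fun j _ => by
          rw [norm_mul]; exact mul_le_mul_of_nonneg_right (hc j) (norm_nonneg _))
      _ ≤ r * (Real.cos (θ / 2) * ∑ j, ‖X j‖) := by
          rw [← mul_sum, ← mul_assoc]
          exact mul_le_mul_of_nonneg_right hδr (sum_nonneg fun _ _ => norm_nonneg _)
      _ ≤ r * ‖∑ j, X j‖ := mul_le_mul_of_nonneg_left hT hr0
  exact angle_le_of_norm_sub_le_of_norm_sub_le (sum_ne_zero_of_pairwise_angle_le hθ hX h)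
    (hnear g hg) (hnear g' hg') hr

end Complex

section EdgeWeighting

variable {V κ β : Type*}

lemma DependsOn.apply_eq_of_singleton {g : (V → κ) → β} {u : V} (hg : DependsOn g {u})
    {σ ψ : V → κ} (h : σ u = ψ u) : g σ = g ψ :=
  hg fun _ hi => by rwa [Set.mem_singleton_iff.1 hi]

variable [DecidableEq V]

lemma DependsOn.comp_update_eq {g : (V → κ) → β} {s : Set V} (hg : DependsOn g s) {u : V}
    (hu : u ∉ s) (j : κ) : (fun σ => g (Function.update σ u j)) = g :=
  funext fun _ => hg fun _ hi => Function.update_of_ne (ne_of_mem_of_not_mem hi hu) _ _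

lemma DependsOn.comp_update_of_pair {g : (V → κ) → β} {a b : V} (hg : DependsOn g {a, b})
    (j : κ) : DependsOn (fun σ => g (Function.update σ a j)) {b} := by
  intro σ σ' h
  refine hg ?_
  rintro i (rfl | rfl)
  · simp
  · rcases eq_or_ne i a with rfl | hne
    · simp
    · simp [hne, h i rfl]

/-- The paper's weights `σ ↦ A^{uv}(σ u, σ v)`, generalised to arbitrary functions of the colours
of the two endpoints, so that the class is closed under freezing the colour of a vertex. -/
def IsNearOneEdgeWeighting (E : Finset (V × V)) (δ : ℝ) (f : V × V → (V → κ) → ℂ) : Prop :=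
  ∀ e ∈ E, DependsOn (f e) {e.1, e.2} ∧ ∀ σ, ‖f e σ - 1‖ ≤ δ

variable {E : Finset (V × V)} {δ : ℝ} {f f' : V × V → (V → κ) → ℂ}

lemma IsNearOneEdgeWeighting.update (hf : IsNearOneEdgeWeighting E δ f)
    (hf' : IsNearOneEdgeWeighting E δ f') (e₀ : V × V) :
    IsNearOneEdgeWeighting E δ (Function.update f e₀ (f' e₀)) := fun e he => by
  rcases eq_or_ne e e₀ with rfl | hne
  · simpa using hf' e he
  · simpa [hne] using hf e he

lemma IsNearOneEdgeWeighting.update_one (hf : IsNearOneEdgeWeighting E δ f) (hδ : 0 ≤ δ)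
    (e₀ : V × V) : IsNearOneEdgeWeighting E δ (Function.update f e₀ 1) :=
  hf.update (f' := 1)
    (fun _ _ => ⟨(dependsOn_const 1).mono (Set.empty_subset _), fun _ => by simpa using hδ⟩) e₀

lemma IsNearOneEdgeWeighting.comp_update (hf : IsNearOneEdgeWeighting E δ f) (u : V) (j : κ) :
    IsNearOneEdgeWeighting E δ (fun e σ => f e (Function.update σ u j)) := fun e he => by
  refine ⟨?_, fun σ => (hf e he).2 _⟩
  have := (hf e he).1
  rw [← coe_pair] at this ⊢
  exact (this.update u j).mono (coe_subset.2 (erase_subset _ _))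

end EdgeWeighting

section PinnedPartitionFunction

variable {V κ : Type*} [Fintype V] [DecidableEq V] [Fintype κ] [DecidableEq κ]

def pinnedColorings (S : Finset V) (φ : V → κ) : Finset (V → κ) :=
  univ.filter fun σ => ∀ v ∈ S, σ v = φ v

def pinnedPartitionFunction (E : Finset (V × V)) (f : V × V → (V → κ) → ℂ) (S : Finset V)
    (φ : V → κ) : ℂ :=
  ∑ σ ∈ pinnedColorings S φ, ∏ e ∈ E, f e σ

variable {E : Finset (V × V)} {f f' : V × V → (V → κ) → ℂ} {S : Finset V} {φ : V → κ}

@[simp]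
lemma mem_pinnedColorings {σ : V → κ} : σ ∈ pinnedColorings S φ ↔ ∀ v ∈ S, σ v = φ v := by
  simp [pinnedColorings]

lemma update_mem_pinnedColorings {σ : V → κ} (hσ : σ ∈ pinnedColorings S φ) (u : V) (j : κ) :
    update σ u j ∈ pinnedColorings S (update φ u j) := by
  simp only [mem_pinnedColorings] at hσ ⊢
  intro v hv
  rcases eq_or_ne v u with rfl | h
  · simp
  · simp [h, hσ v hv]

lemma pinnedColorings_univ (φ : V → κ) : pinnedColorings univ φ = {φ} := by
  ext σ
  simp [funext_iff]

lemma pinnedPartitionFunction_congr (h : ∀ e ∈ E, f e = f' e) :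
    pinnedPartitionFunction E f S φ = pinnedPartitionFunction E f' S φ :=
  sum_congr rfl fun σ _ => prod_congr rfl fun e he => by rw [h e he]

lemma pinnedPartitionFunction_univ :
    pinnedPartitionFunction E f univ φ = ∏ e ∈ E, f e φ := by
  rw [pinnedPartitionFunction, pinnedColorings_univ, sum_singleton]

lemma pinnedPartitionFunction_eq_sum_insert {u : V} (hu : u ∉ S) :
    pinnedPartitionFunction E f S φ =
      ∑ j, pinnedPartitionFunction E f (insert u S) (update φ u j) := by
  rw [pinnedPartitionFunction, ← sum_fiberwise _ (fun σ => σ u)]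
  refine sum_congr rfl fun j _ => sum_congr (Finset.ext fun σ => ?_) fun _ _ => rfl
  have hφ : ∀ v ∈ S, update φ u j v = φ v :=
    fun v hv => update_of_ne (ne_of_mem_of_not_mem hv hu) _ _
  simp only [mem_filter, mem_pinnedColorings, forall_mem_insert, update_self]
  constructor
  · rintro ⟨hS, rfl⟩
    exact ⟨rfl, fun v hv => (hS v hv).trans (hφ v hv).symm⟩
  · rintro ⟨rfl, hS⟩
    exact ⟨fun v hv => (hS v hv).trans (hφ v hv), rfl⟩

lemma pinnedPartitionFunction_update {u : V} (hu : u ∈ S) (j : κ) :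
    pinnedPartitionFunction E f S (update φ u j) =
      pinnedPartitionFunction E (fun e σ => f e (update σ u j)) S φ := by
  symm
  refine sum_nbij' (fun σ => update σ u j) (fun σ => update σ u (φ u))
    (fun σ hσ => update_mem_pinnedColorings hσ u j)
    (fun σ hσ => by simpa using update_mem_pinnedColorings (φ := update φ u j) hσ u (φ u))
    (fun σ hσ => ?_) (fun σ hσ => ?_) fun _ _ => rfl
  · simp [← mem_pinnedColorings.1 hσ u hu]
  · simp [mem_pinnedColorings.1 hσ u hu]

lemma pinnedPartitionFunction_eq_mul_update_one {e₀ : V × V} (he₀ : e₀ ∈ E) {c : ℂ}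
    (hc : ∀ σ ∈ pinnedColorings S φ, f e₀ σ = c) :
    pinnedPartitionFunction E f S φ = c * pinnedPartitionFunction E (update f e₀ 1) S φ := by
  rw [pinnedPartitionFunction, pinnedPartitionFunction, mul_sum]
  refine sum_congr rfl fun σ hσ => ?_
  rw [← mul_prod_erase _ _ he₀, ← mul_prod_erase _ _ he₀, hc σ hσ, update_self, Pi.one_apply,
    one_mul]
  exact congrArg _ (prod_congr rfl fun e he => by rw [update_of_ne (ne_of_mem_erase he)])

end PinnedPartitionFunction

section ZeroFreeness

variable {V κ : Type*} [Fintype V] [DecidableEq V] [Fintype κ] [DecidableEq κ]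

variable (κ) in
def ZeroFreeAt (E : Finset (V × V)) (δ : ℝ) (S : Finset V) : Prop :=
  ∀ f : V × V → (V → κ) → ℂ, IsNearOneEdgeWeighting E δ f → ∀ φ,
    pinnedPartitionFunction E f S φ ≠ 0

variable (κ) in
def EdgeChangeAngleLE (E : Finset (V × V)) (δ B : ℝ) (S : Finset V) : Prop :=
  ∀ f f' : V × V → (V → κ) → ℂ, IsNearOneEdgeWeighting E δ f → IsNearOneEdgeWeighting E δ f' →
    ∀ e₀ ∈ E, (∀ e ∈ E, e ≠ e₀ → f e = f' e) → ∀ u, DependsOn (f e₀) {u} →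
    DependsOn (f' e₀) {u} → ∀ φ,
      angle (pinnedPartitionFunction E f S φ) (pinnedPartitionFunction E f' S φ) ≤ B

variable (κ) in
def PinChangeAngleLE (E : Finset (V × V)) (δ θ : ℝ) (S : Finset V) : Prop :=
  ∀ f : V × V → (V → κ) → ℂ, IsNearOneEdgeWeighting E δ f → ∀ u ∈ S, ∀ φ j k,
    angle (pinnedPartitionFunction E f S (update φ u j))
      (pinnedPartitionFunction E f S (update φ u k)) ≤ θ

variable {E : Finset (V × V)} {δ : ℝ} {f f' : V × V → (V → κ) → ℂ} {S : Finset V} {B θ r : ℝ}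

theorem angle_pinnedPartitionFunction_le_card_mul (h0 : ZeroFreeAt κ E δ S)
    (hB : EdgeChangeAngleLE κ E δ B S) (hf : IsNearOneEdgeWeighting E δ f)
    (hf' : IsNearOneEdgeWeighting E δ f') {D : Finset (V × V)} (hDE : D ⊆ E)
    (heq : ∀ e ∈ E, e ∉ D → f e = f' e)
    (hunary : ∀ e ∈ D, ∃ u, DependsOn (f e) {u} ∧ DependsOn (f' e) {u}) (φ : V → κ) :
    angle (pinnedPartitionFunction E f S φ) (pinnedPartitionFunction E f' S φ) ≤ #D * B := by
  induction D using Finset.induction_on generalizing f with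
  | empty =>
    rw [pinnedPartitionFunction_congr fun e he => heq e he (notMem_empty e),
      angle_self (h0 f' hf' φ)]
    simp
  | insert e₀ D he₀ ih =>
    obtain ⟨u, hu, hu'⟩ := hunary e₀ (mem_insert_self _ _)
    set f'' := Function.update f e₀ (f' e₀)
    have hf'' : IsNearOneEdgeWeighting E δ f'' := hf.update hf' e₀
    have h₁ := hB f f'' hf hf'' e₀ (hDE (mem_insert_self _ _))
      (fun e _ he => (update_of_ne he _ _).symm) u hu (by simpa [f''] using hu') φ
    have h₂ := ih hf'' ((subset_insert _ _).trans hDE)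
      (fun e he heD => by
        rcases eq_or_ne e e₀ with rfl | hne
        · simp [f'']
        · simpa [f'', hne] using heq e he (by simp [hne, heD]))
      (fun e he => by
        simpa [f'', ne_of_mem_of_not_mem he he₀] using hunary e (mem_insert_of_mem he))
    calc _ ≤ angle (pinnedPartitionFunction E f S φ) (pinnedPartitionFunction E f'' S φ) +
          angle (pinnedPartitionFunction E f'' S φ) (pinnedPartitionFunction E f' S φ) :=
          angle_le_angle_add_angle _ _ _
      _ ≤ B + #D * B := add_le_add h₁ h₂
      _ = #(insert e₀ D) * B := by rw [card_insert_of_notMem he₀]; push_cast; ring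

theorem PinChangeAngleLE.of_edgeChangeAngleLE {Δ : ℕ} (h0 : ZeroFreeAt κ E δ S)
    (hB : EdgeChangeAngleLE κ E δ B S) (hB0 : 0 ≤ B) (hBΔ : B * Δ ≤ θ)
    (hdeg : ∀ w, #{e ∈ E | e.1 = w ∨ e.2 = w} ≤ Δ) : PinChangeAngleLE κ E δ θ S := by
  intro f hf u hu φ j k
  rw [pinnedPartitionFunction_update hu, pinnedPartitionFunction_update hu]
  -- after freezing the colour of `u`, only the edges at `u` see the change, each through the
  -- colour of its other endpoint
  refine (angle_pinnedPartitionFunction_le_card_mul h0 hB (hf.comp_update u j)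
    (hf.comp_update u k) (filter_subset (fun e => e.1 = u ∨ e.2 = u) E) (fun e he heu => ?_)
    (fun e he => ?_) φ).trans ?_
  · have hue : u ∉ ({e.1, e.2} : Set V) := by
      rintro (h | h) <;> simp_all [eq_comm]
    rw [(hf e he).1.comp_update_eq hue, (hf e he).1.comp_update_eq hue]
  · obtain ⟨he, h | h⟩ := mem_filter.1 he
    · have hfe := (hf e he).1
      rw [h] at hfe
      exact ⟨e.2, hfe.comp_update_of_pair j, hfe.comp_update_of_pair k⟩
    · have hfe := (hf e he).1
      rw [h, Set.pair_comm] at hfe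
      exact ⟨e.1, hfe.comp_update_of_pair j, hfe.comp_update_of_pair k⟩
  · calc (#{e ∈ E | e.1 = u ∨ e.2 = u} : ℝ) * B ≤ Δ * B := by gcongr; exact_mod_cast hdeg u
      _ ≤ θ := by linarith

theorem angle_pinnedPartitionFunction_le_of_mem (h0 : ZeroFreeAt κ E δ S) (hδ : 0 ≤ δ)
    (hδr : δ ≤ r) (hr : r < 1) (hf : IsNearOneEdgeWeighting E δ f)
    (hf' : IsNearOneEdgeWeighting E δ f') {e₀ : V × V} (he₀ : e₀ ∈ E)
    (heq : ∀ e ∈ E, e ≠ e₀ → f e = f' e) {u : V} (hu : u ∈ S)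
    (hfu : DependsOn (f e₀) {u}) (hfu' : DependsOn (f' e₀) {u}) (φ : V → κ) :
    angle (pinnedPartitionFunction E f S φ) (pinnedPartitionFunction E f' S φ) ≤
      2 * (r / √(1 - r ^ 2)) := by
  -- the weight of `e₀` is the constant `f e₀ φ` on the colorings pinned to `φ` at `u`
  rw [pinnedPartitionFunction_eq_mul_update_one he₀ fun σ hσ =>
      hfu.apply_eq_of_singleton (mem_pinnedColorings.1 hσ u hu),
    pinnedPartitionFunction_eq_mul_update_one he₀ fun σ hσ =>
      hfu'.apply_eq_of_singleton (mem_pinnedColorings.1 hσ u hu),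
    pinnedPartitionFunction_congr (f := Function.update f' e₀ 1) (f' := Function.update f e₀ 1)
      fun e he => ?_, Complex.angle_mul_right (h0 _ (hf.update_one hδ e₀) φ)]
  · refine Complex.angle_le_of_norm_sub_le_of_norm_sub_le one_ne_zero ?_ ?_ hr <;>
      rw [norm_one, mul_one]
    · exact ((hf e₀ he₀).2 φ).trans hδr
    · exact ((hf' e₀ he₀).2 φ).trans hδr
  · rcases eq_or_ne e e₀ with rfl | hne
    · simp
    · simp [hne, heq e he hne]

theorem angle_pinnedPartitionFunction_le_of_notMem [Nonempty κ] {u : V}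
    (h0 : ZeroFreeAt κ E δ (insert u S)) (hpin : PinChangeAngleLE κ E δ θ (insert u S))
    (hθ : θ < 2 * π / 3) (hδ : 0 ≤ δ) (hδr : δ ≤ r * Real.cos (θ / 2)) (hr : r < 1)
    (hf : IsNearOneEdgeWeighting E δ f) (hf' : IsNearOneEdgeWeighting E δ f') {e₀ : V × V}
    (he₀ : e₀ ∈ E) (heq : ∀ e ∈ E, e ≠ e₀ → f e = f' e) (hu : u ∉ S)
    (hfu : DependsOn (f e₀) {u}) (hfu' : DependsOn (f' e₀) {u}) (φ : V → κ) :
    angle (pinnedPartitionFunction E f S φ) (pinnedPartitionFunction E f' S φ) ≤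
      2 * (r / √(1 - r ^ 2)) := by
  set X := fun j => pinnedPartitionFunction E (Function.update f e₀ 1) (insert u S) (update φ u j)
  have hsplit : ∀ g, DependsOn (g e₀) {u} → (∀ e ∈ E, e ≠ e₀ → g e = f e) →
      pinnedPartitionFunction E g S φ = ∑ j, g e₀ (update φ u j) * X j := by
    intro g hgu hgf
    rw [pinnedPartitionFunction_eq_sum_insert hu]
    refine sum_congr rfl fun j _ => ?_
    rw [pinnedPartitionFunction_eq_mul_update_one he₀ fun σ hσ =>
      hgu.apply_eq_of_singleton (mem_pinnedColorings.1 hσ u (mem_insert_self _ _))]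
    refine congrArg _ (pinnedPartitionFunction_congr fun e he => ?_)
    rcases eq_or_ne e e₀ with rfl | hne
    · simp
    · simp [hne, hgf e he hne]
  rw [hsplit f hfu fun _ _ _ => rfl, hsplit f' hfu' fun e he hne => (heq e he hne).symm]
  have hf₁ := hf.update_one hδ e₀
  exact Complex.angle_sum_mul_le hθ (fun j => h0 _ hf₁ _)
    (fun j k => hpin _ hf₁ u (mem_insert_self _ _) φ j k) (fun j => (hf e₀ he₀).2 _)
    (fun j => (hf' e₀ he₀).2 _) hδr hr

theorem ZeroFreeAt.of_forall_insert [Nonempty κ] (hδ : δ < 1) (hθ : θ < 2 * π / 3)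
    (hins : ∀ u ∉ S, ZeroFreeAt κ E δ (insert u S) ∧ PinChangeAngleLE κ E δ θ (insert u S)) :
    ZeroFreeAt κ E δ S := by
  intro f hf φ
  by_cases hS : ∃ u, u ∉ S
  · obtain ⟨u, hu⟩ := hS
    obtain ⟨h0, hpin⟩ := hins u hu
    rw [pinnedPartitionFunction_eq_sum_insert hu]
    exact Complex.sum_ne_zero_of_pairwise_angle_le hθ (fun j => h0 f hf _)
      (hpin f hf u (mem_insert_self _ _) φ)
  · simp only [not_exists, not_not] at hS
    rw [eq_univ_of_forall hS, pinnedPartitionFunction_univ]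
    refine prod_ne_zero_iff.2 fun e he h => ?_
    have := (hf e he).2 φ
    rw [h, zero_sub, norm_neg, norm_one] at this
    linarith

theorem EdgeChangeAngleLE.of_forall_insert [Nonempty κ] (h0 : ZeroFreeAt κ E δ S)
    (hins : ∀ u ∉ S, ZeroFreeAt κ E δ (insert u S) ∧ PinChangeAngleLE κ E δ θ (insert u S))
    (hθ : θ < 2 * π / 3) (hδ : 0 ≤ δ) (hδr : δ ≤ r * Real.cos (θ / 2)) (hr0 : 0 ≤ r)
    (hr : r < 1) (hB : 2 * (r / √(1 - r ^ 2)) ≤ B) : EdgeChangeAngleLE κ E δ B S := by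
  intro f f' hf hf' e₀ he₀ heq u hfu hfu' φ
  refine le_trans ?_ hB
  by_cases hu : u ∈ S
  · exact angle_pinnedPartitionFunction_le_of_mem h0 hδ
      (hδr.trans (mul_le_of_le_one_right hr0 (Real.cos_le_one _))) hr hf hf' he₀ heq hu hfu hfu' φ
  · exact angle_pinnedPartitionFunction_le_of_notMem (hins u hu).1 (hins u hu).2 hθ hδ hδr hr
      hf hf' he₀ heq hu hfu hfu' φ

theorem zeroFreeAt_and_pinChangeAngleLE [Nonempty κ] {Δ : ℕ} (hδ : 0 ≤ δ) (hθ : θ < 2 * π / 3)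
    (hδr : δ ≤ r * Real.cos (θ / 2)) (hr0 : 0 ≤ r) (hr : r < 1)
    (hB : 2 * (r / √(1 - r ^ 2)) ≤ B) (hBΔ : B * Δ ≤ θ)
    (hdeg : ∀ w, #{e ∈ E | e.1 = w ∨ e.2 = w} ≤ Δ) (S : Finset V) :
    ZeroFreeAt κ E δ S ∧ PinChangeAngleLE κ E δ θ S := by
  have hδ1 : δ < 1 := (hδr.trans (mul_le_of_le_one_right hr0 (Real.cos_le_one _))).trans_lt hr
  have hB0 : 0 ≤ B := le_trans (by positivity) hB
  refine Finset.strongDownwardInduction (n := Fintype.card V)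
    (p := fun S => ZeroFreeAt κ E δ S ∧ PinChangeAngleLE κ E δ θ S)
    (fun S ih _ => ?_) S (card_le_univ S)
  have hins : ∀ u ∉ S, ZeroFreeAt κ E δ (insert u S) ∧ PinChangeAngleLE κ E δ θ (insert u S) :=
    fun u hu => ih (card_le_univ _) (ssubset_insert hu)
  have h0 : ZeroFreeAt κ E δ S := .of_forall_insert hδ1 hθ hins
  exact ⟨h0, .of_edgeChangeAngleLE h0 (.of_forall_insert h0 hins hθ hδ hδr hr0 hr hB) hB0 hBΔ
    hdeg⟩

theorem pinnedPartitionFunction_ne_zero [Nonempty κ] {Δ : ℕ} (hδ : 0 ≤ δ)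
    (hθ : θ < 2 * π / 3) (hδr : δ ≤ r * Real.cos (θ / 2)) (hr0 : 0 ≤ r) (hr : r < 1)
    (hB : 2 * (r / √(1 - r ^ 2)) ≤ B) (hBΔ : B * Δ ≤ θ)
    (hdeg : ∀ w, #{e ∈ E | e.1 = w ∨ e.2 = w} ≤ Δ) (hf : IsNearOneEdgeWeighting E δ f)
    (S : Finset V) (φ : V → κ) : pinnedPartitionFunction E f S φ ≠ 0 :=
  (zeroFreeAt_and_pinChangeAngleLE hδ hθ hδr hr0 hr hB hBΔ hdeg S).1 f hf φ

end ZeroFreeness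

lemma SimpleGraph.card_filter_incident_le_degree {V : Type*} [Fintype V] [LinearOrder V]
    (G : SimpleGraph V) [DecidableRel G.Adj] {E : Finset (V × V)}
    (hE : ∀ e ∈ E, e.1 < e.2 ∧ G.Adj e.1 e.2) (w : V) :
    #{e ∈ E | e.1 = w ∨ e.2 = w} ≤ G.degree w := by
  refine (card_le_card fun e he => ?_).trans
    (card_image_le (s := G.neighborFinset w) (f := fun u => if w < u then (w, u) else (u, w)))
  obtain ⟨heE, rfl | rfl⟩ := mem_filter.1 he
  · exact mem_image.2 ⟨e.2, by simpa using (hE e heE).2, by simp [(hE e heE).1]⟩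
  · exact mem_image.2 ⟨e.1, by simpa using (hE e heE).2.symm, by simp [(hE e heE).1.not_gt]⟩

lemma delta_bounds_of_theta_eq {θ τ δ : ℝ} {Δ : ℕ} (hθ0 : 0 < θ) (hθ1 : θ < 2 * π / 3)
    (hτ : τ = Real.cos (θ / 2)) (hθδ : θ = 2 * δ * Δ / (τ * (1 - δ))) :
    0 < δ ∧ δ < τ ∧ δ < 1 ∧ 1 - δ ≤ √(1 - (δ / τ) ^ 2) := by
  have hτ1 : τ ≤ 1 := hτ ▸ Real.cos_le_one _
  have hτ2 : 1 / 2 ≤ τ := by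
    rw [hτ, ← Real.cos_pi_div_three]
    exact Real.cos_le_cos_of_nonneg_of_le_pi (by linarith) (by linarith [pi_pos]) (by linarith)
  have hden : τ * (1 - δ) ≠ 0 := fun h => by rw [h, div_zero] at hθδ; linarith
  have hΔ : (1 : ℝ) ≤ Δ := by
    rcases Nat.eq_zero_or_pos Δ with h | h
    · rw [h, Nat.cast_zero, mul_zero, zero_div] at hθδ; linarith
    · exact_mod_cast h
  have key : θ * (τ * (1 - δ)) = 2 * δ * Δ := by rw [hθδ, div_mul_cancel₀ _ hden]
  have hπ : θ < 2.1 := by linarith [pi_lt_d2]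
  have hθτ : 0 < θ * τ := mul_pos hθ0 (by linarith)
  have hδ0 : 0 < δ := by nlinarith
  have hδ1 : δ < 1 := by nlinarith
  have hδθ : δ * (2 + θ * τ) ≤ θ * τ := by nlinarith [mul_le_mul_of_nonneg_left hΔ hδ0.le]
  have hθτ1 : θ * τ * (1 - τ) < 2 * τ := by nlinarith
  have hθτ2 : θ * τ * (1 + τ ^ 2) ≤ 2 * τ ^ 2 * (2 + θ * τ) := by nlinarith
  have hδτ : δ < τ := by
    by_contra h
    nlinarith [mul_le_mul_of_nonneg_right (not_lt.1 h) (by positivity : (0 : ℝ) ≤ 2 + θ * τ)]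
  have hδτ2 : δ * (1 + τ ^ 2) ≤ 2 * τ ^ 2 := by
    refine le_of_mul_le_mul_right ?_ (by positivity : (0 : ℝ) < 2 + θ * τ)
    nlinarith [mul_le_mul_of_nonneg_left hδθ (by positivity : (0 : ℝ) ≤ 1 + τ ^ 2)]
  refine ⟨hδ0, hδτ, hδ1, ?_⟩
  rw [Real.le_sqrt' (by linarith), div_pow, le_sub_iff_add_le, ← le_sub_iff_add_le',
    div_le_iff₀ (by positivity)]
  nlinarith

theorem stmt16_general (m : ℕ) (G : SimpleGraph (Fin m)) [DecidableRel G.Adj]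
    (Δ q : ℕ) (hq : 2 ≤ q) (hΔ : ∀ v, G.degree v ≤ Δ)
    (A : Fin m → Fin m → Fin q → Fin q → ℂ)
    (θ τ δ : ℝ) (hθ0 : 0 < θ) (hθ1 : θ < 2 * Real.pi / 3)
    (hτ : τ = Real.cos (θ / 2))
    (hθδ : θ = 2 * δ * Δ / (τ * (1 - δ)))
    (hA : ∀ u v, G.Adj u v → ∀ j k, ‖A u v j k - 1‖ < δ)
    (S : Finset (Fin m)) (φ : Fin m → Fin q) :
    ∑ σ ∈ Finset.univ.filter (fun σ : Fin m → Fin q => ∀ v ∈ S, σ v = φ v),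
      ∏ e ∈ Finset.univ.filter
        (fun e : Fin m × Fin m => e.1 < e.2 ∧ G.Adj e.1 e.2),
        A e.1 e.2 (σ e.1) (σ e.2) ≠ 0 := by
  obtain ⟨hδ0, hδτ, hδ1, hsqrt⟩ := delta_bounds_of_theta_eq hθ0 hθ1 hτ hθδ
  have hτ0 : 0 < τ := hδ0.trans hδτ
  have : Nonempty (Fin q) := ⟨⟨0, by omega⟩⟩
  have hZ := pinnedPartitionFunction_ne_zero
    (E := Finset.univ.filter fun e : Fin m × Fin m => e.1 < e.2 ∧ G.Adj e.1 e.2)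
    (f := fun e σ => A e.1 e.2 (σ e.1) (σ e.2)) (r := δ / τ) (B := 2 * δ / (τ * (1 - δ)))
    hδ0.le hθ1 (by rw [← hτ, div_mul_cancel₀ _ hτ0.ne']) (by positivity)
    ((div_lt_one hτ0).2 hδτ) ?_ (by rw [hθδ, div_mul_eq_mul_div])
    (fun w => (G.card_filter_incident_le_degree (fun e he => (mem_filter.1 he).2) w).trans (hΔ w))
    (fun e he => ?_) S φ
  · -- the statement decides `∀ v ∈ S, _` through `Fin m`, not through `S`
    rw [pinnedPartitionFunction, pinnedColorings] at hZ
    convert hZ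
  · calc 2 * (δ / τ / √(1 - (δ / τ) ^ 2)) ≤ 2 * (δ / τ / (1 - δ)) := by gcongr
      _ = 2 * δ / (τ * (1 - δ)) := by field_simp
  · refine ⟨fun σ σ' h => ?_, fun σ => (hA _ _ (mem_filter.1 he).2.2 _ _).le⟩
    simp [h e.1 (by simp), h e.2 (by simp)]

/-- Zero-freeness for weighted graph homomorphism partition functions with
pinnings, when all edge weights are within `δ` of 1. -/
theorem stmt16 (m : ℕ) (G : SimpleGraph (Fin m)) [DecidableRel G.Adj]
    (Δ q : ℕ) (hq : 2 ≤ q) (hΔ : ∀ v, G.degree v ≤ Δ)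
    (A : Fin m → Fin m → Fin q → Fin q → ℂ)
    (θ τ δ : ℝ) (hθ0 : 0 < θ) (hθ1 : θ < 2 * Real.pi / 3)
    (hτ : τ = Real.cos (θ / 2))
    (hδ : δ = (θ * τ / (2 * Δ)) / (1 + θ * τ / (2 * Δ)))
    (hθδ : θ = 2 * δ * Δ / (τ * (1 - δ)))
    (hA : ∀ u v, G.Adj u v → ∀ j k, ‖A u v j k - 1‖ < δ)
    (S : Finset (Fin m)) (φ : Fin m → Fin q) :
    ∑ σ ∈ Finset.univ.filter (fun σ : Fin m → Fin q => ∀ v ∈ S, σ v = φ v),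
      ∏ e ∈ Finset.univ.filter
        (fun e : Fin m × Fin m => e.1 < e.2 ∧ G.Adj e.1 e.2),
        A e.1 e.2 (σ e.1) (σ e.2) ≠ 0 :=
  stmt16_general m G Δ q hq hΔ A θ τ δ hθ0 hθ1 hτ hθδ hA S φ
end

section
/- Let f: {−1,1}^n → ℂ be a function with Fourier–Walsh expansion f(x) = ∑_{S⊆[n]} f̂(S) ∏_{i∈S} x_i, define L(f) = max_i ∑_{S ∋ i} |f̂(S)| and let deg f be the degree of f as a multilinear polynomial. There is an absolute constant C ≈ 0.55 such that if √(deg f) · L(f) < C, then for every S ⊆ [n] and every pinning φ: S → {−1,1}, the partition sum ∑_{x ∈ {−1,1}^n, x|_S = φ} exp(f(x)) is nonzero. -/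
/-!
Barvinok's induction on the set `S` of pinned coordinates, downward from `S = univ`. Write
`Z(S, φ)` for the pinned partition sum and `Z_U(S, φ)` for the same sum twisted by the
character `x^U`, and put `θ = 2/√D`, `κ = 1/cos(θ/2)`. Three statements are proved together:
(i) `|Z_U(S, φ)| ≤ κ^|U \ S| |Z(S, φ)|`; (ii) `Z(S, φ) ≠ 0`; (iii) flipping a pinned coordinate
multiplies `Z(S, φ)` by some `e^w` with `|Im w| ≤ θ`.

For `j ∉ S`, `Z(S, φ)` is the sum of the two pinnings of `x_j`, two complex numbers within angle
`θ < π` of each other by (iii), so the modulus of the sum is at least `cos(θ/2)` times the sum of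
the moduli; this gives (i) and (ii) at `S` from (i)–(iii) at `S ∪ {j}`. For (iii), let the pinned
value of `x_i` slide from `-1` to `1`: the logarithmic derivative of `Z` is
`∑_U ∂_i f̂(U) Z_U / Z`, bounded by `L κ^(D-1)` thanks to (i) at the same `S`, and
`cos(1/√D)^(-(D-1)) ≤ e^(1/2) < 20/11` makes the total change at most `2/√D` once
`√D L ≤ 0.55`.
-/
def WithinAngle (θ : ℝ) (u v : ℂ) : Prop := ∃ w : ℂ, u = v * Complex.exp w ∧ |w.im| ≤ θ

namespace WithinAngle

variable {θ : ℝ} {u v : ℂ}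

lemma nonneg (h : WithinAngle θ u v) : 0 ≤ θ :=
  let ⟨_, _, hw⟩ := h; (abs_nonneg _).trans hw

lemma cos_half_mul_le (h : WithinAngle θ u v) (hθ : θ ≤ Real.pi) :
    Real.cos (θ / 2) * (‖u‖ + ‖v‖) ≤ ‖u + v‖ := by
  obtain ⟨w, rfl, hw⟩ := h
  have hθ0 : 0 ≤ θ := (abs_nonneg _).trans hw
  set s := Real.cos (θ / 2)
  set r := Real.exp w.re
  have hs : 0 ≤ s := Real.cos_nonneg_of_mem_Icc ⟨by linarith [Real.pi_pos], by linarith⟩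
  have hcos : 2 * s ^ 2 - 1 ≤ Real.cos w.im := by
    have := Real.cos_le_cos_of_nonneg_of_le_pi (abs_nonneg w.im) hθ hw
    rwa [Real.cos_abs, show θ = 2 * (θ / 2) by ring, Real.cos_two_mul] at this
  have hsq : ‖Complex.exp w + 1‖ ^ 2 = r ^ 2 + 2 * r * Real.cos w.im + 1 := by
    rw [Complex.sq_norm, Complex.normSq_apply]
    simp only [Complex.add_re, Complex.add_im, Complex.exp_re, Complex.exp_im,
      Complex.one_re, Complex.one_im]
    linear_combination r ^ 2 * Real.sin_sq_add_cos_sq w.im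
  -- `(1 - s²)(r - 1)² ≥ 0` is the whole inequality after squaring
  have key : s * (r + 1) ≤ ‖Complex.exp w + 1‖ := by
    refine le_of_pow_le_pow_left₀ two_ne_zero (norm_nonneg _) ?_
    rw [hsq]
    nlinarith [mul_nonneg (sub_nonneg.2 (Real.cos_sq_le_one (θ / 2))) (sq_nonneg (r - 1)),
      mul_le_mul_of_nonneg_left hcos (Real.exp_pos w.re).le]
  calc s * (‖v * Complex.exp w‖ + ‖v‖) = ‖v‖ * (s * (r + 1)) := by
        rw [norm_mul, Complex.norm_exp]; ring
    _ ≤ ‖v‖ * ‖Complex.exp w + 1‖ := by gcongr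
    _ = ‖v * Complex.exp w + v‖ := by rw [← norm_mul]; ring_nf

lemma add_ne_zero (h : WithinAngle θ u v) (hθ : θ < Real.pi) (hv : v ≠ 0) : u + v ≠ 0 := by
  have hcos : 0 < Real.cos (θ / 2) :=
    Real.cos_pos_of_mem_Ioo ⟨by linarith [Real.pi_pos, h.nonneg], by linarith⟩
  rw [← norm_pos_iff]
  calc 0 < Real.cos (θ / 2) * (‖u‖ + ‖v‖) := by positivity
    _ ≤ ‖u + v‖ := h.cos_half_mul_le hθ.le

end WithinAngle

theorem exists_eq_mul_exp_of_norm_deriv_le {Z Z' : ℝ → ℂ} {a b M : ℝ} (hab : a ≤ b)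
    (hZ : ∀ t ∈ Set.Icc a b, HasDerivAt Z (Z' t) t) (hZ' : ContinuousOn Z' (Set.Icc a b))
    (hne : ∀ t ∈ Set.Icc a b, Z t ≠ 0) (hM : ∀ t ∈ Set.Icc a b, ‖Z' t‖ ≤ M * ‖Z t‖) :
    ∃ w, Z b = Z a * Complex.exp w ∧ ‖w‖ ≤ M * (b - a) := by
  set p : ℝ → ℝ := fun t => max a (min b t)
  have hp : ∀ t, p t ∈ Set.Icc a b := fun t => ⟨le_max_left _ _, max_le hab (min_le_left _ _)⟩
  have hp_eq : ∀ t ∈ Set.Icc a b, p t = t := fun t ht => by simp [p, ht.1, ht.2]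
  have hpc : Continuous p := by fun_prop
  have hZc : ContinuousOn Z (Set.Icc a b) := fun t ht => (hZ t ht).continuousAt.continuousWithinAt
  set g : ℝ → ℂ := fun t => Z' (p t) / Z (p t)
  have hg : Continuous g :=
    (hZ'.comp_continuous hpc hp).div (hZc.comp_continuous hpc hp) fun t => hne _ (hp t)
  set w : ℝ → ℂ := fun t => ∫ s in a..t, g s
  have hw : ∀ t, HasDerivAt w (g t) t := fun t => (hg.integral_hasStrictDerivAt a t).hasDerivAt
  have hE : ∀ t ∈ Set.Icc a b, HasDerivAt (fun t => Z t * Complex.exp (-w t)) 0 t := by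
    intro t ht
    have hgt : g t = Z' t / Z t := by simp only [g, hp_eq t ht]
    refine ((hZ t ht).mul (hw t).neg.cexp).congr_deriv ?_
    rw [hgt]
    field_simp [hne t ht]
    ring
  have hconst := constant_of_has_deriv_right_zero
    (fun t ht => (hE t ht).continuousAt.continuousWithinAt)
    (fun t ht => (hE t (Set.Ico_subset_Icc_self ht)).hasDerivWithinAt) b (Set.right_mem_Icc.2 hab)
  refine ⟨w b, ?_, ?_⟩
  · simp only [w, intervalIntegral.integral_same, neg_zero, Complex.exp_zero, mul_one] at hconst
    rw [← hconst, mul_assoc, ← Complex.exp_add, neg_add_cancel, Complex.exp_zero, mul_one]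
  · have hg_le : ∀ t, ‖g t‖ ≤ M := fun t => by
      rw [norm_div, div_le_iff₀ (norm_pos_iff.2 (hne _ (hp t)))]
      exact hM _ (hp t)
    have := intervalIntegral.norm_integral_le_of_norm_le_const (a := a) (b := b)
      fun t _ => hg_le t
    rwa [abs_of_nonneg (sub_nonneg.2 hab)] at this

theorem Real.exp_mul_one_sub_inv_le_pow {β : ℝ} (hβ : 0 < β) (k : ℕ) :
    Real.exp (k * (1 - β⁻¹)) ≤ β ^ k := by
  rw [← Real.exp_log (pow_pos hβ k), Real.log_pow]
  gcongr
  exact Real.one_sub_inv_le_log_of_pos hβ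

lemma exp_neg_half_le_cos_inv_sqrt_pow {D : ℕ} (hD : 1 ≤ D) :
    Real.exp (-(1 / 2)) ≤ Real.cos (1 / √D) ^ (D - 1) := by
  have hD' : (1 : ℝ) ≤ D := by exact_mod_cast hD
  set β : ℝ := 1 - 1 / (2 * D)
  have hβ : 0 < β := by
    have : 1 / (2 * (D : ℝ)) ≤ 1 / 2 := by gcongr; linarith
    linarith
  have hcos : β ≤ Real.cos (1 / √D) := by
    have := Real.one_sub_sq_div_two_le_cos (x := 1 / √D)
    rwa [div_pow, Real.sq_sqrt (by positivity), one_pow, div_div, mul_comm] at this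
  refine le_trans ?_ ((Real.exp_mul_one_sub_inv_le_pow hβ _).trans (by gcongr))
  gcongr
  rw [Nat.cast_sub hD, Nat.cast_one]
  have : 1 - β⁻¹ = -1 / (2 * D - 1) := by
    rw [show β = (2 * D - 1) / (2 * D) by simp only [β]; field_simp, inv_div]
    field_simp [show (2 * D - 1 : ℝ) ≠ 0 by linarith]
    ring
  rw [this, mul_div_assoc', le_div_iff₀ (by linarith)]
  linarith

lemma exp_half_lt_twenty_div_eleven : Real.exp (1 / 2) < 20 / 11 := by
  refine lt_of_pow_lt_pow_left₀ 2 (by norm_num) ?_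
  rw [← Real.exp_nat_mul]
  norm_num
  linarith [Real.exp_one_lt_d9]

lemma two_mul_mul_inv_cos_pow_le {D : ℕ} (hD : 1 ≤ D) {L : ℝ} (hL : √D * L ≤ 11 / 20) :
    2 * L * (Real.cos (1 / √D))⁻¹ ^ (D - 1) ≤ 2 / √D := by
  have hsqrt : 0 < √(D : ℝ) := Real.sqrt_pos.2 (by exact_mod_cast hD)
  have hpow : (Real.cos (1 / √D))⁻¹ ^ (D - 1) < 20 / 11 := by
    have h := exp_neg_half_le_cos_inv_sqrt_pow hD
    rw [inv_pow]
    refine (inv_le_of_inv_le₀ (Real.exp_pos _) ?_).trans_lt exp_half_lt_twenty_div_eleven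
    rwa [← Real.exp_neg]
  have hcos : 0 < Real.cos (1 / √D) := by
    refine Real.cos_pos_of_mem_Ioo ⟨by linarith [Real.pi_pos, one_div_pos.2 hsqrt], ?_⟩
    have : 1 / √(D : ℝ) ≤ 1 := by
      rw [div_le_one hsqrt, Real.one_le_sqrt]; exact_mod_cast hD
    linarith [Real.pi_gt_three]
  set κ := (Real.cos (1 / √D))⁻¹ ^ (D - 1)
  have hκ : 0 ≤ κ := by positivity
  rw [le_div_iff₀ hsqrt]
  nlinarith [mul_le_mul_of_nonneg_right hL hκ]

namespace BooleanCube

open Finset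

noncomputable section

variable {ι : Type*}

def spin (b : Bool) : ℂ := if b then 1 else -1

def walsh (T : Finset ι) (x : ι → Bool) : ℂ := ∏ i ∈ T, spin (x i)

lemma norm_spin (b : Bool) : ‖spin b‖ = 1 := by cases b <;> simp [spin]

lemma norm_walsh (T : Finset ι) (x : ι → Bool) : ‖walsh T x‖ = 1 := by
  simp [walsh, norm_spin]

lemma walsh_update_of_notMem [DecidableEq ι] {U : Finset ι} {i : ι} (hi : i ∉ U)
    (x : ι → Bool) (b : Bool) : walsh U (Function.update x i b) = walsh U x :=
  prod_congr rfl fun j hj => by rw [Function.update_of_ne (ne_of_mem_of_not_mem hj hi)]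

variable [Fintype ι] [DecidableEq ι]

def eval (f : Finset ι → ℂ) (x : ι → Bool) : ℂ := ∑ T, f T * walsh T x

def subcube (S : Finset ι) (φ : ι → Bool) : Finset (ι → Bool) := {x | ∀ i ∈ S, x i = φ i}

def partitionSum (f : Finset ι → ℂ) (S : Finset ι) (φ : ι → Bool) : ℂ :=
  ∑ x ∈ subcube S φ, Complex.exp (eval f x)

def twistedSum (f : Finset ι → ℂ) (U S : Finset ι) (φ : ι → Bool) : ℂ :=
  ∑ x ∈ subcube S φ, walsh U x * Complex.exp (eval f x)

structure Admissible (D : ℕ) (L : ℝ) (f : Finset ι → ℂ) : Prop where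
  card_le : ∀ T, f T ≠ 0 → #T ≤ D
  influence_le : ∀ i, ∑ T with i ∈ T, ‖f T‖ ≤ L

lemma mem_subcube {S : Finset ι} {φ x : ι → Bool} : x ∈ subcube S φ ↔ ∀ i ∈ S, x i = φ i := by
  simp [subcube]

lemma subcube_univ (φ : ι → Bool) : subcube univ φ = {φ} := by
  ext x
  simp [mem_subcube, funext_iff]

lemma twistedSum_empty (f : Finset ι → ℂ) (S : Finset ι) (φ : ι → Bool) :
    twistedSum f ∅ S φ = partitionSum f S φ := by
  simp [twistedSum, partitionSum, walsh]

lemma filter_subcube_eq {S : Finset ι} {i : ι} (hi : i ∉ S) (φ : ι → Bool) (b : Bool) :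
    {x ∈ subcube S φ | x i = b} = subcube (insert i S) (Function.update φ i b) := by
  ext x
  simp only [mem_filter, mem_subcube, forall_mem_insert, Function.update_self]
  refine ⟨fun ⟨h, hb⟩ => ⟨hb, fun j hj => ?_⟩, fun ⟨hb, h⟩ => ⟨fun j hj => ?_, hb⟩⟩
  · rw [h j hj, Function.update_of_ne (ne_of_mem_of_not_mem hj hi)]
  · rw [h j hj, Function.update_of_ne (ne_of_mem_of_not_mem hj hi)]

lemma twistedSum_eq_add {S : Finset ι} {i : ι} (hi : i ∉ S) (f : Finset ι → ℂ) (U : Finset ι)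
    (φ : ι → Bool) :
    twistedSum f U S φ = twistedSum f U (insert i S) (Function.update φ i true)
      + twistedSum f U (insert i S) (Function.update φ i false) := by
  simp only [twistedSum, ← filter_subcube_eq hi, Bool.eq_false_iff]
  exact (sum_filter_add_sum_filter_not _ _ _).symm

lemma partitionSum_eq_add {S : Finset ι} {i : ι} (hi : i ∉ S) (f : Finset ι → ℂ)
    (φ : ι → Bool) :
    partitionSum f S φ = partitionSum f (insert i S) (Function.update φ i true)
      + partitionSum f (insert i S) (Function.update φ i false) := by
  simpa only [twistedSum_empty] using twistedSum_eq_add hi f ∅ φ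

lemma norm_twistedSum_of_subset {U S : Finset ι} (hU : U ⊆ S) (f : Finset ι → ℂ)
    (φ : ι → Bool) : ‖twistedSum f U S φ‖ = ‖partitionSum f S φ‖ := by
  have : twistedSum f U S φ = walsh U φ * partitionSum f S φ := by
    rw [twistedSum, partitionSum, mul_sum]
    refine sum_congr rfl fun x hx => ?_
    rw [walsh, walsh, prod_congr rfl fun i hi => by rw [mem_subcube.1 hx i (hU hi)]]
  rw [this, norm_mul, norm_walsh, one_mul]

lemma sum_mul_twistedSum (g f : Finset ι → ℂ) (S : Finset ι) (φ : ι → Bool) :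
    ∑ U, g U * twistedSum f U S φ = ∑ x ∈ subcube S φ, eval g x * Complex.exp (eval f x) := by
  simp only [twistedSum, eval, mul_sum, sum_mul]
  rw [sum_comm]
  exact sum_congr rfl fun _ _ => sum_congr rfl fun _ _ => by ring

lemma sum_filter_notMem_insert {M : Type*} [AddCommMonoid M] (i : ι) (h : Finset ι → M) :
    ∑ U with i ∉ U, h (insert i U) = ∑ T with i ∈ T, h T := by
  refine sum_nbij' (insert i) (fun T => T.erase i) ?_ ?_ ?_ ?_ fun _ _ => rfl <;>
    intro T hT <;> simp only [mem_filter, mem_univ, true_and] at hT ⊢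
  · exact mem_insert_self i T
  · exact notMem_erase i T
  · exact erase_insert hT
  · exact insert_erase hT

/-- The coefficients of `f` with the variable `x i` replaced by the constant `s`. -/
def restrict (f : Finset ι → ℂ) (i : ι) (s : ℂ) (U : Finset ι) : ℂ :=
  if i ∉ U then f U + s * f (insert i U) else 0

def discreteDeriv (f : Finset ι → ℂ) (i : ι) (U : Finset ι) : ℂ :=
  if i ∉ U then f (insert i U) else 0

lemma eval_restrict_spin_self (f : Finset ι → ℂ) (i : ι) (x : ι → Bool) :
    eval (restrict f i (spin (x i))) x = eval f x := by
  have hins : ∀ U, i ∉ U → walsh (insert i U) x = spin (x i) * walsh U x :=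
    fun U hU => prod_insert hU
  rw [eval, eval,
    ← sum_filter_add_sum_filter_not univ (fun T => i ∉ T) (fun T => f T * walsh T x)]
  simp only [not_not, restrict, ite_mul, zero_mul]
  rw [← sum_filter, ← sum_filter_notMem_insert, ← sum_add_distrib]
  refine sum_congr rfl fun U hU => ?_
  rw [hins U (mem_filter.1 hU).2]
  ring

lemma eval_update_of_eq_zero {g : Finset ι → ℂ} {i : ι} (hg : ∀ U, i ∈ U → g U = 0)
    (x : ι → Bool) (b : Bool) : eval g (Function.update x i b) = eval g x := by
  refine sum_congr rfl fun U _ => ?_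
  by_cases hU : i ∈ U
  · simp [hg U hU]
  · rw [walsh_update_of_notMem hU]

lemma eval_restrict_spin (f : Finset ι → ℂ) (i : ι) (b : Bool) (x : ι → Bool) :
    eval (restrict f i (spin b)) x = eval f (Function.update x i b) := by
  rw [← eval_restrict_spin_self f i (Function.update x i b), Function.update_self,
    eval_update_of_eq_zero (g := restrict f i (spin b)) (fun U hU => if_neg (not_not.2 hU))]

lemma eval_restrict (f : Finset ι → ℂ) (i : ι) (s : ℂ) (x : ι → Bool) :
    eval (restrict f i s) x = eval (restrict f i 0) x + s * eval (discreteDeriv f i) x := by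
  simp only [eval, mul_sum, ← sum_add_distrib]
  refine sum_congr rfl fun U _ => ?_
  by_cases hU : i ∈ U
  · simp [restrict, discreteDeriv, hU]
  · simp only [restrict, discreteDeriv, hU, not_false_eq_true, if_true]
    ring

lemma partitionSum_restrict_spin {S : Finset ι} {i : ι} (hi : i ∈ S) (f : Finset ι → ℂ)
    (b : Bool) (φ : ι → Bool) :
    partitionSum (restrict f i (spin b)) S φ = partitionSum f S (Function.update φ i b) := by
  rw [partitionSum, partitionSum]
  refine sum_nbij' (Function.update · i b) (Function.update · i (φ i)) ?_ ?_ ?_ ?_ ?_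
  · intro x hx
    simp only [mem_subcube] at hx ⊢
    intro j hj
    rcases eq_or_ne j i with rfl | hji
    · simp
    · simp [Function.update_of_ne hji, hx j hj]
  · intro y hy
    simp only [mem_subcube] at hy ⊢
    intro j hj
    rcases eq_or_ne j i with rfl | hji
    · simp
    · simpa [Function.update_of_ne hji] using hy j hj
  · intro x hx
    simp [← mem_subcube.1 hx i hi]
  · intro y hy
    have : y i = b := by simpa using mem_subcube.1 hy i hi
    simp [← this]
  · intro x _
    rw [eval_restrict_spin]

namespace Admissible

variable {D : ℕ} {L : ℝ} {f : Finset ι → ℂ}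

lemma nonneg (hf : Admissible D L f) (i : ι) : 0 ≤ L :=
  (sum_nonneg fun _ _ => norm_nonneg _).trans (hf.influence_le i)

lemma card_lt_of_discreteDeriv_ne_zero (hf : Admissible D L f) {i : ι} {U : Finset ι}
    (h : discreteDeriv f i U ≠ 0) : #U < D := by
  have hiU : i ∉ U := by by_contra hiU; simp [discreteDeriv, hiU] at h
  have := hf.card_le _ (by simpa [discreteDeriv, hiU] using h)
  rwa [card_insert_of_notMem hiU, Nat.add_one_le_iff] at this

lemma sum_norm_discreteDeriv_le (hf : Admissible D L f) (i : ι) :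
    ∑ U, ‖discreteDeriv f i U‖ ≤ L := by
  simp only [discreteDeriv, apply_ite, norm_zero]
  rw [← sum_filter, sum_filter_notMem_insert (h := fun T => ‖f T‖)]
  exact hf.influence_le i

lemma restrict (hf : Admissible D L f) (i : ι) {s : ℂ} (hs : ‖s‖ ≤ 1) :
    Admissible D L (restrict f i s) where
  card_le T hT := by
    by_cases hiT : i ∈ T
    · simp [BooleanCube.restrict, hiT] at hT
    by_cases hfT : f T = 0
    · have : f (insert i T) ≠ 0 := fun h => hT (by simp [BooleanCube.restrict, hfT, h])
      exact (card_le_card (subset_insert i T)).trans (hf.card_le _ this)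
    · exact hf.card_le T hfT
  influence_le j := by
    rcases eq_or_ne j i with rfl | hji
    · refine le_of_eq_of_le (sum_eq_zero fun T hT => ?_) (hf.nonneg j)
      simp [BooleanCube.restrict, (mem_filter.1 hT).2]
    set h : Finset ι → ℝ := fun T => if j ∈ T then ‖f T‖ else 0
    have hpoint : ∀ T, (if j ∈ T then ‖BooleanCube.restrict f i s T‖ else 0)
        ≤ if i ∉ T then h T + h (insert i T) else 0 := by
      intro T
      have hh : ∀ T, 0 ≤ h T := fun T => by positivity
      by_cases hiT : i ∈ T
      · simp [BooleanCube.restrict, hiT]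
      by_cases hjT : j ∈ T
      · simp only [BooleanCube.restrict, hiT, hjT, h, mem_insert_of_mem, not_false_eq_true,
          if_true]
        calc ‖f T + s * f (insert i T)‖ ≤ ‖f T‖ + ‖s‖ * ‖f (insert i T)‖ :=
              (norm_add_le _ _).trans_eq (by rw [norm_mul])
          _ ≤ ‖f T‖ + ‖f (insert i T)‖ := by
              gcongr; exact mul_le_of_le_one_left (norm_nonneg _) hs
      · simpa [hiT, hjT] using add_nonneg (hh T) (hh (insert i T))
    calc ∑ T with j ∈ T, ‖BooleanCube.restrict f i s T‖
        ≤ ∑ T, if i ∉ T then h T + h (insert i T) else 0 := by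
          rw [sum_filter]; exact sum_le_sum fun T _ => hpoint T
      _ = ∑ T, h T := by
          rw [← sum_filter, sum_add_distrib, sum_filter_notMem_insert,
            sum_filter_not_add_sum_filter]
      _ = ∑ T with j ∈ T, ‖f T‖ := (sum_filter _ _).symm
      _ ≤ L := hf.influence_le j

end Admissible

section Induction

variable {κ θ : ℝ} {D : ℕ} {L : ℝ} {f : Finset ι → ℂ} {S : Finset ι}

def TwistedSumBound (κ : ℝ) (f : Finset ι → ℂ) (S : Finset ι) : Prop :=
  ∀ U φ, ‖twistedSum f U S φ‖ ≤ κ ^ #(U \ S) * ‖partitionSum f S φ‖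

def FlipAngleBound (θ : ℝ) (f : Finset ι → ℂ) (S : Finset ι) : Prop :=
  ∀ i ∈ S, ∀ φ, WithinAngle θ (partitionSum f S (Function.update φ i true))
    (partitionSum f S (Function.update φ i false))

lemma twistedSumBound_of_insert (hθ : θ < Real.pi)
    (h : ∀ j ∉ S, TwistedSumBound (Real.cos (θ / 2))⁻¹ f (insert j S) ∧
      FlipAngleBound θ f (insert j S)) :
    TwistedSumBound (Real.cos (θ / 2))⁻¹ f S := by
  intro U φ
  by_cases hUS : U ⊆ S
  · rw [norm_twistedSum_of_subset hUS, sdiff_eq_empty_iff_subset.2 hUS, card_empty, pow_zero,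
      one_mul]
  obtain ⟨j, hjU, hjS⟩ := not_subset.1 hUS
  obtain ⟨hbound, hangle⟩ := h j hjS
  have hflip := hangle j (mem_insert_self j S) φ
  have hsum := hflip.cos_half_mul_le hθ.le
  rw [← partitionSum_eq_add hjS] at hsum
  have hcos : 0 < Real.cos (θ / 2) :=
    Real.cos_pos_of_mem_Ioo ⟨by linarith [Real.pi_pos, hflip.nonneg], by linarith⟩
  have hcard : #(U \ insert j S) + 1 = #(U \ S) := by
    rw [sdiff_insert, card_erase_add_one (mem_sdiff.2 ⟨hjU, hjS⟩)]
  set κ := (Real.cos (θ / 2))⁻¹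
  calc ‖twistedSum f U S φ‖
      ≤ ‖twistedSum f U (insert j S) (Function.update φ j true)‖
        + ‖twistedSum f U (insert j S) (Function.update φ j false)‖ := by
        rw [twistedSum_eq_add hjS]; exact norm_add_le _ _
    _ ≤ κ ^ #(U \ insert j S) * (‖partitionSum f (insert j S) (Function.update φ j true)‖
        + ‖partitionSum f (insert j S) (Function.update φ j false)‖) := by
        rw [mul_add]; exact add_le_add (hbound U _) (hbound U _)
    _ ≤ κ ^ #(U \ insert j S) * (κ * ‖partitionSum f S φ‖) := by
        gcongr
        rw [inv_mul_eq_div, le_div_iff₀' hcos]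
        exact hsum
    _ = κ ^ #(U \ S) * ‖partitionSum f S φ‖ := by rw [← hcard, pow_succ]; ring

lemma partitionSum_univ (f : Finset ι → ℂ) (φ : ι → Bool) :
    partitionSum f univ φ = Complex.exp (eval f φ) := by
  simp [partitionSum, subcube_univ]

lemma partitionSum_ne_zero_of_insert (hθ : θ < Real.pi) {i : ι} (hi : i ∉ S)
    (hne : ∀ φ, partitionSum f (insert i S) φ ≠ 0) (hangle : FlipAngleBound θ f (insert i S))
    (φ : ι → Bool) : partitionSum f S φ ≠ 0 := by
  rw [partitionSum_eq_add hi]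
  exact (hangle i (mem_insert_self i S) φ).add_ne_zero hθ (hne _)

lemma norm_sum_discreteDeriv_mul_twistedSum_le (hκ : 1 ≤ κ) (hf : Admissible D L f)
    {g : Finset ι → ℂ} (hg : TwistedSumBound κ g S) (i : ι) (φ : ι → Bool) :
    ‖∑ U, discreteDeriv f i U * twistedSum g U S φ‖
      ≤ L * κ ^ (D - 1) * ‖partitionSum g S φ‖ := by
  have hterm : ∀ U, ‖discreteDeriv f i U * twistedSum g U S φ‖
      ≤ ‖discreteDeriv f i U‖ * (κ ^ (D - 1) * ‖partitionSum g S φ‖) := by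
    intro U
    rw [norm_mul]
    by_cases h0 : discreteDeriv f i U = 0
    · simp [h0]
    have hU := hf.card_lt_of_discreteDeriv_ne_zero h0
    refine mul_le_mul_of_nonneg_left ((hg U φ).trans ?_) (norm_nonneg _)
    gcongr
    exact (card_le_card sdiff_subset).trans (by omega)
  calc _ ≤ ∑ U, ‖discreteDeriv f i U‖ * (κ ^ (D - 1) * ‖partitionSum g S φ‖) :=
        (norm_sum_le _ _).trans (sum_le_sum fun U _ => hterm U)
    _ ≤ L * (κ ^ (D - 1) * ‖partitionSum g S φ‖) := by
        rw [← sum_mul]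
        exact mul_le_mul_of_nonneg_right (hf.sum_norm_discreteDeriv_le i)
          (mul_nonneg (pow_nonneg (zero_le_one.trans hκ) _) (norm_nonneg _))
    _ = _ := by ring

lemma partitionSum_restrict_eq (f : Finset ι → ℂ) (i : ι) (S : Finset ι) (φ : ι → Bool)
    (s : ℂ) : partitionSum (restrict f i s) S φ = ∑ x ∈ subcube S φ,
      Complex.exp (eval (restrict f i 0) x + s * eval (discreteDeriv f i) x) :=
  sum_congr rfl fun x _ => by rw [eval_restrict]

lemma sum_discreteDeriv_mul_twistedSum_restrict_eq (f : Finset ι → ℂ) (i : ι) (S : Finset ι)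
    (φ : ι → Bool) (s : ℂ) :
    ∑ U, discreteDeriv f i U * twistedSum (restrict f i s) U S φ = ∑ x ∈ subcube S φ,
      eval (discreteDeriv f i) x
        * Complex.exp (eval (restrict f i 0) x + s * eval (discreteDeriv f i) x) := by
  rw [sum_mul_twistedSum]
  exact sum_congr rfl fun x _ => by rw [eval_restrict]

lemma hasDerivAt_partitionSum_restrict (f : Finset ι → ℂ) (i : ι) (S : Finset ι)
    (φ : ι → Bool) (t : ℝ) :
    HasDerivAt (fun t : ℝ => partitionSum (restrict f i t) S φ)
      (∑ U, discreteDeriv f i U * twistedSum (restrict f i t) U S φ) t := by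
  simp only [partitionSum_restrict_eq, sum_discreteDeriv_mul_twistedSum_restrict_eq]
  refine HasDerivAt.fun_sum fun x _ => ?_
  have hlin : HasDerivAt (fun t : ℝ => eval (restrict f i 0) x
      + (t : ℂ) * eval (discreteDeriv f i) x) (eval (discreteDeriv f i) x) t := by
    simpa using ((Complex.ofRealCLM.hasDerivAt (x := t)).mul_const
      (eval (discreteDeriv f i) x)).const_add (eval (restrict f i 0) x)
  simpa only [mul_comm] using hlin.cexp

lemma continuous_sum_discreteDeriv_mul_twistedSum_restrict (f : Finset ι → ℂ) (i : ι)
    (S : Finset ι) (φ : ι → Bool) :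
    Continuous fun t : ℝ => ∑ U, discreteDeriv f i U * twistedSum (restrict f i t) U S φ := by
  simp only [sum_discreteDeriv_mul_twistedSum_restrict_eq]
  fun_prop

/-- The argument of `partitionSum` moves slowly as the pinned value of `x i` slides from `-1`
to `1`, because its logarithmic derivative is a combination of twisted sums. -/
lemma flipAngleBound_of_forall_admissible (hκ : 1 ≤ κ) (hM : 2 * L * κ ^ (D - 1) ≤ θ)
    (hf : Admissible D L f)
    (h : ∀ g, Admissible D L g → TwistedSumBound κ g S ∧ ∀ φ, partitionSum g S φ ≠ 0) :
    FlipAngleBound θ f S := by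
  intro i hi φ
  have hadm : ∀ t ∈ Set.Icc (-1 : ℝ) 1, Admissible D L (restrict f i t) := fun t ht =>
    hf.restrict i (by rw [Complex.norm_real, Real.norm_eq_abs, abs_le]; exact ht)
  obtain ⟨w, hw, hnorm⟩ := exists_eq_mul_exp_of_norm_deriv_le (by norm_num)
    (fun t _ => hasDerivAt_partitionSum_restrict f i S φ t)
    (continuous_sum_discreteDeriv_mul_twistedSum_restrict f i S φ).continuousOn
    (fun t ht => (h _ (hadm t ht)).2 φ)
    (fun t ht => norm_sum_discreteDeriv_mul_twistedSum_le hκ hf (h _ (hadm t ht)).1 i φ)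
  refine ⟨w, ?_, (Complex.abs_im_le_norm w).trans (hnorm.trans (by linarith))⟩
  have h1 : spin true = ((1 : ℝ) : ℂ) := by simp [spin]
  have h0 : spin false = ((-1 : ℝ) : ℂ) := by simp [spin]
  rwa [← partitionSum_restrict_spin hi, ← partitionSum_restrict_spin hi, h1, h0]

theorem twistedSumBound_ne_zero_flipAngleBound (hθ0 : 0 ≤ θ) (hθ : θ < Real.pi)
    (hM : 2 * L * (Real.cos (θ / 2))⁻¹ ^ (D - 1) ≤ θ) (S : Finset ι) :
    ∀ f, Admissible D L f → TwistedSumBound (Real.cos (θ / 2))⁻¹ f S ∧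
      (∀ φ, partitionSum f S φ ≠ 0) ∧ FlipAngleBound θ f S := by
  have hκ : 1 ≤ (Real.cos (θ / 2))⁻¹ :=
    one_le_inv₀ (Real.cos_pos_of_mem_Ioo ⟨by linarith [Real.pi_pos], by linarith⟩) |>.2
      (Real.cos_le_one _)
  refine strongDownwardInductionOn (n := Fintype.card ι) S (fun S ih _ => ?_) S.card_le_univ
  have hins : ∀ j ∉ S, ∀ f, Admissible D L f →
      TwistedSumBound (Real.cos (θ / 2))⁻¹ f (insert j S) ∧
        (∀ φ, partitionSum f (insert j S) φ ≠ 0) ∧ FlipAngleBound θ f (insert j S) :=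
    fun j hj => ih (card_le_univ _) (ssubset_insert hj)
  have htwist : ∀ f, Admissible D L f → TwistedSumBound (Real.cos (θ / 2))⁻¹ f S :=
    fun f hf => twistedSumBound_of_insert hθ fun j hj =>
      ⟨(hins j hj f hf).1, (hins j hj f hf).2.2⟩
  have hne : ∀ f, Admissible D L f → ∀ φ, partitionSum f S φ ≠ 0 := by
    intro f hf φ
    by_cases hS : S = univ
    · rw [hS, partitionSum_univ]
      exact Complex.exp_ne_zero _
    obtain ⟨i, -, hi⟩ := exists_of_ssubset (ssubset_univ_iff.2 hS)
    exact partitionSum_ne_zero_of_insert hθ hi (hins i hi f hf).2.1 (hins i hi f hf).2.2 φ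
  exact fun f hf => ⟨htwist f hf, hne f hf,
    flipAngleBound_of_forall_admissible hκ hM hf fun g hg => ⟨htwist g hg, hne g hg⟩⟩

end Induction

theorem partitionSum_ne_zero {D : ℕ} (hD : 1 ≤ D) {L : ℝ} (hL : √D * L ≤ 11 / 20)
    {f : Finset ι → ℂ} (hf : Admissible D L f) (S : Finset ι) (φ : ι → Bool) :
    partitionSum f S φ ≠ 0 := by
  have hsqrt : 1 ≤ √(D : ℝ) := Real.one_le_sqrt.2 (by exact_mod_cast hD)
  have hθ : 2 / √(D : ℝ) ≤ 2 := div_le_self zero_le_two hsqrt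
  have hM := two_mul_mul_inv_cos_pow_le hD hL
  rw [show 1 / √(D : ℝ) = 2 / √D / 2 by ring] at hM
  exact (twistedSumBound_ne_zero_flipAngleBound (by positivity)
    (by linarith [Real.pi_gt_three]) hM S f hf).2.1 φ

lemma admissible_one_zero_of_card_le_zero {f : Finset ι → ℂ} (hf : ∀ T, f T ≠ 0 → #T ≤ 0) :
    Admissible 1 0 f where
  card_le T hT := (hf T hT).trans zero_le_one
  influence_le i := by
    refine (sum_eq_zero fun T hT => ?_).le
    by_contra h
    exact notMem_empty i (card_eq_zero.1 (Nat.le_zero.1 (hf T (norm_ne_zero_iff.1 h))) ▸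
      (mem_filter.1 hT).2)

end

end BooleanCube

/-- Barvinok's zero-freeness theorem for partition functions on the Boolean
cube: if `√(deg f) · L(f) < C` for an absolute constant `C ≈ 0.55`, then all
pinned partition sums `∑ exp(f(x))` are nonzero. -/
theorem stmt17 : ∃ C : ℝ, 0.55 ≤ C ∧
    ∀ (n : ℕ) (fhat : Finset (Fin n) → ℂ) (D : ℕ) (L : ℝ),
      (∀ T : Finset (Fin n), fhat T ≠ 0 → T.card ≤ D) →
      (∀ i : Fin n,
        ∑ T ∈ Finset.univ.filter (fun T : Finset (Fin n) => i ∈ T),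
          ‖fhat T‖ ≤ L) →
      Real.sqrt D * L < C →
      ∀ (S : Finset (Fin n)) (φ : Fin n → Bool),
        ∑ x ∈ Finset.univ.filter (fun x : Fin n → Bool => ∀ i ∈ S, x i = φ i),
          Complex.exp (∑ T : Finset (Fin n),
            fhat T * ∏ i ∈ T, (if x i then 1 else -1 : ℂ)) ≠ 0 := by
  refine ⟨0.55, le_rfl, fun n fhat D L hdeg hinf hDL S φ => ?_⟩
  -- over `Fin n` the filter is decided by `Nat.decidableForallFin`, hence `convert`
  suffices h : BooleanCube.partitionSum fhat S φ ≠ 0 by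
    rw [BooleanCube.partitionSum, BooleanCube.subcube] at h; convert h; rfl
  rcases Nat.eq_zero_or_pos D with rfl | hD
  · exact BooleanCube.partitionSum_ne_zero le_rfl (by norm_num)
      (BooleanCube.admissible_one_zero_of_card_le_zero hdeg) S φ
  · exact BooleanCube.partitionSum_ne_zero hD (by norm_num at hDL ⊢; linarith) ⟨hdeg, hinf⟩ S φ
end

section
/- Let t > 1 and let D̄ = D̄(−(t²+1)/(t²−1), 2t/(t²−1)) be the closed disk with the given center and radius. Then the set −D̄·D̄ = {−zw : z,w ∈ D̄} is contained in −H̄_c·H̄_c where c = (t−1)/(t+1) and H̄_c = {x+iy : x ≤ −c}; consequently the complement of −D̄·D̄ contains the open parabolic region {x+iy : y² < 4c²(x+c²)}, and in particular contains the positive real axis. -/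
open Pointwise

/-!
The disk lies in the half-plane `H̄_c`: its rightmost point is
`-(t²+1)/(t²-1) + 2t/(t²-1) = -(t-1)/(t+1)`. So it suffices to show that `-H̄_c·H̄_c` misses the
parabolic region. Writing `z = -a + ip`, `w = -b + iq` with `a, b ≥ c`, the point `-zw` has
real part `pq - ab` and imaginary part `aq + bp`, and `(aq + bp)² = (aq - bp)² + 4abpq ≥ 4abpq`
together with `ab ≥ c²` puts it outside the parabola.
-/

lemma four_sq_mul_sub_add_sq_le_sq {a b p q c : ℝ} (hc : 0 ≤ c) (ha : c ≤ a) (hb : c ≤ b) :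
    4 * c ^ 2 * (p * q - a * b + c ^ 2) ≤ (a * q + b * p) ^ 2 := by
  have hab : c ^ 2 ≤ a * b := by nlinarith
  rcases le_or_gt (p * q) 0 with hpq | hpq
  · nlinarith [sq_nonneg (a * q + b * p)]
  · nlinarith [sq_nonneg (a * q - b * p), mul_le_mul_of_nonneg_right hab hpq.le]

lemma Complex.closedBall_subset_re_le (z₀ : ℂ) (r : ℝ) :
    Metric.closedBall z₀ r ⊆ {z : ℂ | z.re ≤ z₀.re + r} := fun z hz => by
  have hre : (z - z₀).re ≤ ‖z - z₀‖ := Complex.re_le_norm _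
  rw [Metric.mem_closedBall, Complex.dist_eq] at hz
  rw [Complex.sub_re] at hre
  exact show z.re ≤ z₀.re + r by linarith

lemma parabola_subset_compl_neg_mul_re_le {c : ℝ} (hc : 0 ≤ c) :
    {z : ℂ | z.im ^ 2 < 4 * c ^ 2 * (z.re + c ^ 2)} ⊆
      (-({z : ℂ | z.re ≤ -c} * {z : ℂ | z.re ≤ -c}))ᶜ := by
  rintro _ hlt ⟨z, hz, w, hw, hzw⟩
  have hineq := four_sq_mul_sub_add_sq_le_sq (p := z.im) (q := w.im) hc
    (le_neg_of_le_neg hz) (le_neg_of_le_neg hw)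
  simp only [Set.mem_ofPred_eq, ← neg_eq_iff_eq_neg.mpr hzw, Complex.neg_re, Complex.neg_im,
    Complex.mul_re, Complex.mul_im] at hlt
  nlinarith

/-- The negated Minkowski square of the closed disk
`D̄(-(t²+1)/(t²-1), 2t/(t²-1))` is contained in `-H̄c·H̄c` with
`c = (t-1)/(t+1)`; consequently its complement contains the open parabolic
region `{y² < 4c²(x+c²)}` and in particular the positive real axis. -/
theorem stmt19 (t c : ℝ) (ht : 1 < t) (hc : c = (t - 1) / (t + 1))
    (Dbar : Set ℂ)
    (hD : Dbar = Metric.closedBall ((-((t ^ 2 + 1) / (t ^ 2 - 1)) : ℝ) : ℂ)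
           (2 * t / (t ^ 2 - 1))) :
    -(Dbar * Dbar) ⊆ -({z : ℂ | z.re ≤ -c} * {z : ℂ | z.re ≤ -c}) ∧
    {z : ℂ | z.im ^ 2 < 4 * c ^ 2 * (z.re + c ^ 2)} ⊆ (-(Dbar * Dbar))ᶜ ∧
    ∀ x : ℝ, 0 < x → (x : ℂ) ∈ (-(Dbar * Dbar))ᶜ := by
  have hc_pos : 0 < c := hc ▸ div_pos (by linarith) (by linarith)
  have hrightmost : -((t ^ 2 + 1) / (t ^ 2 - 1)) + 2 * t / (t ^ 2 - 1) = -c := by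
    have : t ^ 2 - 1 ≠ 0 := by nlinarith
    rw [hc]; field_simp; ring
  have hD_sub : Dbar ⊆ {z : ℂ | z.re ≤ -c} := by
    rw [hD, ← hrightmost]
    exact Complex.closedBall_subset_re_le _ _
  have hsub := Set.neg_subset_neg.mpr (Set.mul_subset_mul hD_sub hD_sub)
  have hparabola :=
    (parabola_subset_compl_neg_mul_re_le hc_pos.le).trans (Set.compl_subset_compl.mpr hsub)
  refine ⟨hsub, hparabola, fun x hx => hparabola ?_⟩
  show (x : ℂ).im ^ 2 < 4 * c ^ 2 * ((x : ℂ).re + c ^ 2)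
  rw [Complex.ofReal_im, Complex.ofReal_re, sq, zero_mul]
  positivity
end
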